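/- arXiv:1806.02119 — 8 statements merged into one kernel-verified Lean document; each statement's English description precedes it below -/
import Mathlib

section
/- Let p be a prime, and let ζ₁, ..., ζ_ℓ be p-th roots of unity in ℂ with 1 ≤ ℓ < p. Then no linear combination c₁ζ₁ + ... + c_ℓζ_ℓ with positive natural number coefficients c₁, ..., c_ℓ can equal 0. -/
/-!
Write every `ζᵢ` as `ω ^ kᵢ` with `ω = exp (2πi/p)` and `kᵢ < p`, and put `P = ∑ cᵢ X ^ kᵢ ∈ ℚ[X]`.
Then `P(ω) = 0`, so the minimal polynomial `Φ_p = 1 + X + ⋯ + X ^ (p - 1)` of `ω` divides `P`;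
as `deg P < p`, `P` is a constant multiple of `Φ_p`. Since `ℓ < p`, some coefficient of `P` below
degree `p` vanishes, so `P = 0`, contradicting `P(1) = ∑ cᵢ > 0`.
-/

open Polynomial

theorem Fintype.exists_lt_forall_ne_of_card_lt {ι : Type*} [Fintype ι] (k : ι → ℕ) {n : ℕ}
    (h : Fintype.card ι < n) : ∃ m < n, ∀ i, k i ≠ m := by
  classical
  have hcard : (Finset.univ.image k).card < (Finset.range n).card := by
    simpa using Finset.card_image_le.trans_lt h
  obtain ⟨m, hm, hmk⟩ := Finset.exists_mem_notMem_of_card_lt_card hcard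
  exact ⟨m, Finset.mem_range.mp hm, fun i hi => hmk (Finset.mem_image.mpr ⟨i, by simp, hi⟩)⟩

namespace Polynomial

theorem coeff_cyclotomic_prime_of_lt (R : Type*) [Ring R] {p m : ℕ} (hp : p.Prime) (hm : m < p) :
    (cyclotomic p R).coeff m = 1 := by
  have : Fact p.Prime := ⟨hp⟩
  simp [cyclotomic_prime, coeff_X_pow, hm]

end Polynomial

theorem IsPrimitiveRoot.eq_zero_of_aeval_eq_zero_of_coeff_eq_zero {K : Type*} [Field K]
    [CharZero K] {μ : K} {p : ℕ} (hμ : IsPrimitiveRoot μ p) (hp : p.Prime) {P : ℚ[X]}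
    (hdeg : P.natDegree < p) (hroot : aeval μ P = 0) {m : ℕ} (hm : m < p) (hPm : P.coeff m = 0) :
    P = 0 := by
  have hdvd : cyclotomic p ℚ ∣ P := cyclotomic_eq_minpoly_rat hμ hp.pos ▸ minpoly.dvd ℚ μ hroot
  have hdegΦ : P.natDegree ≤ (cyclotomic p ℚ).natDegree := by
    rw [natDegree_cyclotomic, Nat.totient_prime hp]
    omega
  have hP := eq_leadingCoeff_mul_of_monic_of_dvd_of_natDegree_le (cyclotomic.monic p ℚ) hdvd hdegΦ
  simpa [coeff_cyclotomic_prime_of_lt ℚ hp hm, hPm] using (congrArg (coeff · m) hP).symm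

/-- Let `p` be a prime and let `ζ₁, …, ζ_ℓ` be `p`-th roots of unity
in `ℂ` with `1 ≤ ℓ < p`.  Then no linear combination `c₁ζ₁ + ⋯ + c_ℓζ_ℓ` with positive
natural number coefficients can equal `0`. -/
theorem no_positive_combination_of_pth_roots_vanishes
    (p : ℕ) (hp : p.Prime) (ℓ : ℕ) (hℓ1 : 1 ≤ ℓ) (hℓp : ℓ < p)
    (ζ : Fin ℓ → ℂ) (hζ : ∀ i, (ζ i) ^ p = 1)
    (c : Fin ℓ → ℕ) (hc : ∀ i, 0 < c i) :
    (∑ i, (c i : ℂ) * ζ i) ≠ 0 := by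
  intro hsum
  have : NeZero p := ⟨hp.ne_zero⟩
  obtain ⟨ω, hω⟩ : ∃ ω : ℂ, IsPrimitiveRoot ω p := ⟨_, Complex.isPrimitiveRoot_exp p hp.ne_zero⟩
  choose k hk hkζ using fun i => hω.eq_pow_of_pow_eq_one (hζ i)
  obtain ⟨m, hm, hkm⟩ := Fintype.exists_lt_forall_ne_of_card_lt k (by simpa using hℓp)
  set P : ℚ[X] := ∑ i, monomial (k i) (c i : ℚ)
  have hdeg : P.natDegree < p :=
    (natDegree_sum_le_of_forall_le _ _ fun i _ =>
      (natDegree_monomial_le _).trans (Nat.le_sub_one_of_lt (hk i))).trans_lt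
      (Nat.sub_one_lt hp.ne_zero)
  have hroot : aeval ω P = 0 := by
    simpa [P, aeval_monomial, hkζ] using hsum
  have hPm : P.coeff m = 0 := by
    simp [P, finsetSum_coeff, coeff_monomial, hkm]
  have hP := hω.eq_zero_of_aeval_eq_zero_of_coeff_eq_zero hp hdeg hroot hm hPm
  have hsum_pos : 0 < ∑ i, (c i : ℚ) :=
    Finset.sum_pos (fun i _ => by exact_mod_cast hc i) (Finset.univ_nonempty_iff.mpr ⟨⟨0, hℓ1⟩⟩)
  have hP1 : P.eval 1 = ∑ i, (c i : ℚ) := by simp [P, eval_finsetSum]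
  rw [hP, eval_zero] at hP1
  exact hsum_pos.ne' hP1.symm
end

section
/- Let p be an odd prime and n a natural number divisible by p. Then there exists an element σ in the normalizer N_{S_n}(P) of a Sylow p-subgroup P of S_n with σ ∉ A_n. -/
/-!
A `p`-group with `p` odd consists of permutations of odd order, hence lies in `A_n`. The Frattini
argument then gives `N_{S_n}(P) ⊔ A_n = S_n`, so the normalizer cannot lie inside `A_n`, which is
a proper subgroup since `n ≥ p ≥ 2`.
-/

open Equiv Equiv.Perm Subgroup

theorem Int.units_eq_one_of_pow_eq_one_of_odd {u : ℤˣ} {m : ℕ} (hm : Odd m) (hu : u ^ m = 1) :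
    u = 1 := by
  rcases Int.units_eq_one_or u with rfl | rfl
  · rfl
  · rw [hm.neg_one_pow] at hu
    exact absurd hu (by decide)

section Alternating

variable {α : Type*} [Fintype α] [DecidableEq α]

theorem alternatingGroup_ne_top [Nontrivial α] : alternatingGroup α ≠ ⊤ := fun h => by
  simpa [h] using alternatingGroup.index_eq_two (α := α)

theorem IsPGroup.le_alternatingGroup {p : ℕ} (hp : Odd p) {H : Subgroup (Perm α)}
    (hH : IsPGroup p H) : H ≤ alternatingGroup α := by
  intro σ hσ
  obtain ⟨k, hk⟩ := hH ⟨σ, hσ⟩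
  have hσk : σ ^ p ^ k = 1 := by simpa using congrArg Subtype.val hk
  rw [mem_alternatingGroup]
  exact Int.units_eq_one_of_pow_eq_one_of_odd (hp.pow (n := k)) (by rw [← map_pow, hσk, map_one])

end Alternating

theorem Sylow.exists_mem_normalizer_notMem {G : Type*} [Group G] [Finite G] {p : ℕ} [Fact p.Prime]
    (P : Sylow p G) {N : Subgroup G} [N.Normal] (hPN : (P : Subgroup G) ≤ N) (hN : N ≠ ⊤) :
    ∃ g ∈ normalizer (P : Set G), g ∉ N := by
  by_contra! h
  exact hN (by rw [← P.normalizer_sup_eq_top' hPN, sup_eq_right.mpr h])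

/-- Let `p` be an odd prime and `n` a natural number divisible by `p`.
Then there exists an element `σ` of the normalizer in `S_n` of a Sylow `p`-subgroup `P`
with `σ ∉ A_n`. -/
theorem normalizer_of_sylow_not_in_alternating
    (p n : ℕ) [Fact p.Prime] (hodd : Odd p) (hn : 0 < n) (hdvd : p ∣ n)
    (P : Sylow p (Equiv.Perm (Fin n))) :
    ∃ σ : Equiv.Perm (Fin n),
      σ ∈ Subgroup.normalizer ((P : Subgroup (Equiv.Perm (Fin n))) : Set (Equiv.Perm (Fin n))) ∧
      σ ∉ alternatingGroup (Fin n) := by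
  have : Nontrivial (Fin n) :=
    Fin.nontrivial_iff_two_le.mpr ((Fact.out : p.Prime).two_le.trans (Nat.le_of_dvd hn hdvd))
  exact P.exists_mem_normalizer_notMem (P.isPGroup'.le_alternatingGroup hodd)
    alternatingGroup_ne_top
end

section
/- Let λ be a partition of 2^k (k ≥ 2) such that the 2-adic valuation of the degree of the irreducible character χ^λ of S_{2^k} equals 1. Then λ has exactly two hooks of length 2^{k-1}, namely the hooks at positions (1,2) and (2,1), and there exist x ∈ {1, ..., 2^{k-1}−1} and y ∈ {x−1, ..., 2^{k-1}−2} such that λ = (2^{k-1}−x+1, 2^{k-1}−y, 2^{x−1}, 1^{y−x+1}). -/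
/-! A partition of `n = 2q` has all hook lengths at most `n`, so when no hook is divisible by `n`
the hooks divisible by `q` have length exactly `q`. Hook lengths strictly decrease to the
south-east, so two distinct cells with hook length `q` are incomparable; one lies in a column
`≥ 1` and the other in a row `≥ 1`, whence `h(0,1) ≥ q` and `h(1,0) ≥ q`. But for
`λ = (a, b, r)` one has `h(0,1) + h(1,0) + Σ (rᵢ - 2)⁺ + 2 = n + min b 2`, which forces
`h(0,1) = h(1,0) = q`, `b ≥ 2` and `rᵢ ≤ 2`; reading `a` and `b` off the two hooks gives the
shape. -/

namespace PaperNote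

/-- `l` is a partition of `n`: a weakly decreasing list of positive integers summing to `n`. -/
def IsPartition (l : List ℕ) (n : ℕ) : Prop :=
  l.Pairwise (· ≥ ·) ∧ (∀ a ∈ l, 0 < a) ∧ l.sum = n

/-- The `j`-th part (0-indexed) of the conjugate partition. -/
def conj (l : List ℕ) (j : ℕ) : ℕ := l.countP (fun a => decide (j < a))

/-- The cells (0-indexed) of the Young diagram of `l`. -/
def cells (l : List ℕ) : Finset (ℕ × ℕ) :=
  (Finset.range l.length ×ˢ Finset.range (l.getD 0 0)).filter (fun p => p.2 < l.getD p.1 0)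

/-- The hook length `h_{i,j}(λ) = λ_i + λ'_j − i − j − 1` (0-indexed `i`, `j`). -/
def hook (l : List ℕ) (i j : ℕ) : ℕ :=
  (l.getD i 0 - j) + (conj l j - i) - 1

/-- The degree of the irreducible character `χ^λ` of `S_n`, by the hook length formula. -/
def charDegree (l : List ℕ) : ℕ :=
  Nat.factorial l.sum / ∏ p ∈ cells l, hook l p.1 p.2

/-- The set `H_e(λ)` of cells whose hook length is divisible by `e`. -/
def hookCells (l : List ℕ) (e : ℕ) : Finset (ℕ × ℕ) :=
  (cells l).filter (fun p => e ∣ hook l p.1 p.2)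

/-- `l` is a hook partition of `n`, i.e. of the form `(n − x, 1^x)`. -/
def IsHookPartition (l : List ℕ) (n : ℕ) : Prop :=
  ∃ x, x ≤ n - 1 ∧ l = (n - x) :: List.replicate x 1

/-- The cells of the skew diagram `[λ ∖ μ]`. -/
def skewCells (lam mu : List ℕ) : Finset (ℕ × ℕ) :=
  (cells lam).filter (fun p => mu.getD p.1 0 ≤ p.2)

/-- `q` comes weakly before `p` in the reading order (right to left, top to bottom). -/
def readsBefore (q p : ℕ × ℕ) : Prop :=
  q.1 < p.1 ∨ (q.1 = p.1 ∧ p.2 ≤ q.2)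

instance : DecidableRel readsBefore := fun q p => by unfold readsBefore; infer_instance

/-- `T` is a Littlewood–Richardson configuration of type `ν` for the skew diagram
`[λ ∖ μ]`: entries are positive, weakly increasing along rows, strictly increasing down
columns, the number of entries equal to `v+1` is `ν_v`, and the word obtained by reading
the entries right to left, top to bottom is a reverse lattice sequence. -/
def IsLRTableau (lam mu nu : List ℕ) (T : ℕ × ℕ → ℕ) : Prop :=
  (∀ p ∈ skewCells lam mu, 1 ≤ T p) ∧
  (∀ i j j', (i, j) ∈ skewCells lam mu → (i, j') ∈ skewCells lam mu → j ≤ j' →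
      T (i, j) ≤ T (i, j')) ∧
  (∀ i i' j, (i, j) ∈ skewCells lam mu → (i', j) ∈ skewCells lam mu → i < i' →
      T (i, j) < T (i', j)) ∧
  (∀ v : ℕ, ((skewCells lam mu).filter (fun p => T p = v + 1)).card = nu.getD v 0) ∧
  (∀ p ∈ skewCells lam mu, ∀ v : ℕ,
    ((skewCells lam mu).filter (fun q => readsBefore q p ∧ T q = v + 2)).card ≤
    ((skewCells lam mu).filter (fun q => readsBefore q p ∧ T q = v + 1)).card)

/-- The partition `Δ²(λ)`: writing the odd parts of `λ` as `2kᵢ+1` and the even parts as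
`2rⱼ`, it is obtained by sorting decreasingly the multiset consisting of `kᵢ+1` for the
larger half of the `kᵢ`, the remaining `kᵢ`, and the `rⱼ` (discarding zero parts). -/
def deltaSq (lam : List ℕ) : List ℕ :=
  let ks := (lam.filter (fun a => decide (a % 2 = 1))).map (fun a => a / 2)
  let rs := (lam.filter (fun a => decide (a % 2 = 0))).map (fun a => a / 2)
  ((((ks.take (ks.length / 2)).map (· + 1)) ++ ks.drop (ks.length / 2) ++ rs).insertionSort
      (· ≥ ·)).filter (fun a => decide (0 < a))

/-- The set of beta-numbers (first-column hook lengths) of the partition `l`. -/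
def betaSet (l : List ℕ) : Finset ℕ :=
  (Finset.range l.length).image (fun i => l.getD i 0 + (l.length - 1 - i))

/-- The Murnaghan–Nakayama recursion, computed on beta-sets: `MN μ B` is the value of the
irreducible character of the symmetric group labelled by the partition with beta-set `B`
at an element of full cycle type `μ`.  Each step removes a rim hook of length `c`
(the head of the cycle type), which on beta-sets replaces `b ∈ B` by `b − c ∉ B`, with sign
`(−1)^(leg length)`, the leg length being the number of elements of `B` strictly between
`b − c` and `b`. -/
def MN : List ℕ → Finset ℕ → ℤ
  | [], _ => 1
  | c :: rest, B =>
    ∑ b ∈ B.filter (fun b => c ≤ b ∧ (b - c) ∉ B),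
      (-1 : ℤ) ^ ((B.filter (fun a => b - c < a ∧ a < b)).card) *
        MN rest (insert (b - c) (B.erase b))


theorem conj_cons (a : ℕ) (l : List ℕ) (j : ℕ) :
    conj (a :: l) j = conj l j + if j < a then 1 else 0 := by
  simp [conj, List.countP_cons]

theorem conj_zero_of_pos {L : List ℕ} (hpos : ∀ a ∈ L, 0 < a) : conj L 0 = L.length :=
  List.countP_eq_length.2 (by simpa using hpos)

theorem conj_anti (L : List ℕ) : Antitone (conj L) :=
  fun _ _ h => List.countP_mono_left fun a _ ha => by simp only [decide_eq_true_eq] at *; omega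

/-- Row `i` contributes `1`, `1` and `λᵢ - 2` cells to the columns `0`, `1` and `≥ 2`. -/
theorem sum_eq_conj_zero_add_conj_one_add (L : List ℕ) :
    L.sum = conj L 0 + conj L 1 + (L.map (· - 2)).sum := by
  induction L with
  | nil => rfl
  | cons a l ih =>
    simp only [List.sum_cons, List.map_cons, conj_cons, ih]
    split_ifs <;> omega

section Sorted

variable {L : List ℕ} (hs : L.Pairwise (· ≥ ·))
include hs

theorem getD_anti : Antitone (L.getD · 0) := by
  intro i i' h
  dsimp only
  rcases lt_or_ge i' L.length with h' | h'
  · simp only [List.getD_eq_getElem _ _ h', List.getD_eq_getElem _ _ (h.trans_lt h')]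
    rcases h.eq_or_lt with rfl | hlt
    · rfl
    · exact List.pairwise_iff_getElem.1 hs _ _ _ _ hlt
  · rw [List.getD_eq_default _ _ h']
    exact Nat.zero_le _

theorem lt_conj_of_lt_getD {i j : ℕ} (h : j < L.getD i 0) : i < conj L j := by
  induction L generalizing i with
  | nil => simp at h
  | cons a l ih =>
    cases i with
    | zero => simp only [List.getD_cons_zero] at h; simp [conj_cons, h]
    | succ i =>
      have hja : j < a := h.trans_le (getD_anti hs (Nat.zero_le (i + 1)))
      simp only [List.getD_cons_succ] at h
      simpa [conj_cons, hja] using ih hs.of_cons h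

theorem mem_cells_iff {p : ℕ × ℕ} : p ∈ cells L ↔ p.2 < L.getD p.1 0 := by
  simp only [cells, Finset.mem_filter, Finset.mem_product, Finset.mem_range]
  refine ⟨And.right, fun h => ⟨⟨?_, h.trans_le (getD_anti hs (Nat.zero_le _))⟩, h⟩⟩
  by_contra hl
  rw [List.getD_eq_default _ _ (not_lt.1 hl)] at h
  exact Nat.not_lt_zero _ h

theorem hook_add_add_one {p : ℕ × ℕ} (h : p ∈ cells L) :
    hook L p.1 p.2 + p.1 + p.2 + 1 = L.getD p.1 0 + conj L p.2 := by
  have hrow := (mem_cells_iff hs).1 h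
  have hcol := lt_conj_of_lt_getD hs hrow
  unfold hook
  omega

theorem mem_cells_of_le {p p' : ℕ × ℕ} (hle : p ≤ p') (h : p' ∈ cells L) :
    p ∈ cells L := by
  rw [mem_cells_iff hs] at h ⊢
  exact (h.trans_le' hle.2).trans_le (getD_anti hs hle.1)

theorem hook_add_sub_le {p p' : ℕ × ℕ} (hle : p ≤ p') (h : p' ∈ cells L) :
    hook L p'.1 p'.2 + (p'.1 - p.1) + (p'.2 - p.2) ≤ hook L p.1 p.2 := by
  have e := hook_add_add_one hs h
  have e' := hook_add_add_one hs (mem_cells_of_le hs hle h)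
  have hrow : L.getD p'.1 0 ≤ L.getD p.1 0 := getD_anti hs hle.1
  have hcol : conj L p'.2 ≤ conj L p.2 := conj_anti L hle.2
  have := Prod.le_def.1 hle
  omega

theorem lt_and_lt_of_hook_eq {p₁ p₂ : ℕ × ℕ} (h₁ : p₁ ∈ cells L) (h₂ : p₂ ∈ cells L)
    (hne : p₁ ≠ p₂) (heq : hook L p₁.1 p₁.2 = hook L p₂.1 p₂.2) :
    (p₁.1 < p₂.1 ∧ p₂.2 < p₁.2) ∨ (p₂.1 < p₁.1 ∧ p₁.2 < p₂.2) := by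
  have incomparable : ∀ {p p' : ℕ × ℕ}, p' ∈ cells L → hook L p.1 p.2 = hook L p'.1 p'.2 →
      p ≤ p' → p = p' := fun {p p'} h heq hle => by
    have := hook_add_sub_le hs hle h
    have := Prod.le_def.1 hle
    exact Prod.ext (by omega) (by omega)
  by_contra hcon
  have : p₁ ≤ p₂ ∨ p₂ ≤ p₁ := by simp only [Prod.le_def]; omega
  rcases this with hle | hle
  · exact hne (incomparable h₂ heq hle)
  · exact hne (incomparable h₁ heq.symm hle).symm

theorem one_le_hook {p : ℕ × ℕ} (h : p ∈ cells L) : 1 ≤ hook L p.1 p.2 := by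
  have hrow := (mem_cells_iff hs).1 h
  have := lt_conj_of_lt_getD hs hrow
  have := hook_add_add_one hs h
  omega

theorem hook_le_sum (hpos : ∀ a ∈ L, 0 < a) {p : ℕ × ℕ} (h : p ∈ cells L) :
    hook L p.1 p.2 ≤ L.sum := by
  have h00 : ((0, 0) : ℕ × ℕ) ≤ p := ⟨Nat.zero_le _, Nat.zero_le _⟩
  have hle := hook_add_sub_le hs h00 h
  have e := hook_add_add_one hs (mem_cells_of_le hs h00 h)
  dsimp only at hle e
  rw [conj_zero_of_pos hpos] at e
  cases L with
  | nil => simp [cells] at h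
  | cons a t =>
    have := List.length_le_sum_of_one_le t fun c hc => hpos c (List.mem_cons_of_mem a hc)
    simp only [List.getD_cons_zero, List.length_cons, List.sum_cons] at e ⊢
    omega

theorem hook_le_hook_zero_one_and_hook_one_zero {p₁ p₂ : ℕ × ℕ} (h₁ : p₁ ∈ cells L)
    (h₂ : p₂ ∈ cells L) (hne : p₁ ≠ p₂) (heq : hook L p₁.1 p₁.2 = hook L p₂.1 p₂.2) :
    (0, 1) ∈ cells L ∧ (1, 0) ∈ cells L ∧
      hook L p₁.1 p₁.2 ≤ hook L 0 1 ∧ hook L p₁.1 p₁.2 ≤ hook L 1 0 := by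
  have below : ∀ {p p' : ℕ × ℕ}, p ≤ p' → p' ∈ cells L →
      p ∈ cells L ∧ hook L p'.1 p'.2 ≤ hook L p.1 p.2 := fun hle h =>
    ⟨mem_cells_of_le hs hle h, (Nat.le_add_right _ _).trans
      ((Nat.le_add_right _ _).trans (hook_add_sub_le hs hle h))⟩
  rcases lt_and_lt_of_hook_eq hs h₁ h₂ hne heq with ⟨h1, h2⟩ | ⟨h1, h2⟩
  · obtain ⟨c01, k01⟩ := below (p := (0, 1)) (Prod.mk_le_mk.2 ⟨by omega, by omega⟩) h₁
    obtain ⟨c10, k10⟩ := below (p := (1, 0)) (Prod.mk_le_mk.2 ⟨by omega, by omega⟩) h₂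
    exact ⟨c01, c10, k01, heq ▸ k10⟩
  · obtain ⟨c01, k01⟩ := below (p := (0, 1)) (Prod.mk_le_mk.2 ⟨by omega, by omega⟩) h₂
    obtain ⟨c10, k10⟩ := below (p := (1, 0)) (Prod.mk_le_mk.2 ⟨by omega, by omega⟩) h₁
    exact ⟨c01, c10, heq ▸ k01, k10⟩

theorem mem_cells_and_hook_eq_of_mem_hookCells {q : ℕ} (hpos : ∀ a ∈ L, 0 < a)
    (hsum : L.sum = 2 * q) (h : (hookCells L (2 * q)).card = 0) {p : ℕ × ℕ}
    (hp : p ∈ hookCells L q) : p ∈ cells L ∧ hook L p.1 p.2 = q := by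
  obtain ⟨hc, m, hm⟩ := Finset.mem_filter.1 hp
  have hne : hook L p.1 p.2 ≠ 2 * q := fun he => by
    have : p ∈ hookCells L (2 * q) := Finset.mem_filter.2 ⟨hc, by rw [he]⟩
    simp [Finset.card_eq_zero.1 h] at this
  have h1 := one_le_hook hs hc
  have h2 := hook_le_sum hs hpos hc
  refine ⟨hc, ?_⟩
  rcases m with _ | _ | m
  · omega
  · simpa using hm
  · have : 2 * q ≤ q * (m + 1 + 1) := by nlinarith
    omega

end Sorted

theorem hook_zero_one_add_hook_one_zero {a b : ℕ} (r : List ℕ) (ha : 2 ≤ a) (hb : 1 ≤ b) :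
    hook (a :: b :: r) 0 1 + hook (a :: b :: r) 1 0 + (r.map (· - 2)).sum + 2 =
      (a :: b :: r).sum + min b 2 := by
  simp only [hook, conj_cons, List.getD_cons_zero, List.getD_cons_succ, List.sum_cons]
  rw [sum_eq_conj_zero_add_conj_one_add r]
  split_ifs <;> omega

theorem hook_zero_one_cons_cons {a b : ℕ} (r : List ℕ) (ha : 1 < a) (hb : 1 < b) :
    hook (a :: b :: r) 0 1 = a + conj r 1 := by
  simp only [hook, conj_cons, List.getD_cons_zero, if_pos ha, if_pos hb]
  omega

theorem hook_one_zero_cons_cons {a b : ℕ} {r : List ℕ} (hpos : ∀ c ∈ a :: b :: r, 0 < c) :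
    hook (a :: b :: r) 1 0 = b + r.length := by
  simp only [hook, conj_zero_of_pos hpos, List.getD_cons_succ, List.getD_cons_zero,
    List.length_cons]
  omega

theorem eq_replicate_two_append_replicate_one {r : List ℕ} (hs : r.Pairwise (· ≥ ·))
    (hpos : ∀ c ∈ r, 0 < c) (hle : ∀ c ∈ r, c ≤ 2) :
    r = List.replicate (conj r 1) 2 ++ List.replicate (r.length - conj r 1) 1 := by
  induction r with
  | nil => rfl
  | cons c t ih =>
    have ih := ih hs.of_cons (fun d hd => hpos d (List.mem_cons_of_mem c hd))
      (fun d hd => hle d (List.mem_cons_of_mem c hd))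
    have hc1 := hpos c List.mem_cons_self
    have hc2 := hle c List.mem_cons_self
    rcases (show c = 1 ∨ c = 2 by omega) with rfl | rfl
    · have ht : conj t 1 = 0 := List.countP_eq_zero.2 fun d hd => by
        have := List.rel_of_pairwise_cons hs hd
        simpa using this
      rw [ht] at ih
      simp only [conj_cons, ht, List.length_cons, lt_irrefl, if_false]
      simpa [List.replicate_succ] using ih
    · simp only [conj_cons, List.length_cons, Nat.one_lt_two, if_true, List.replicate_succ,
        List.cons_append, Nat.add_sub_add_right]
      exact congrArg _ ih

theorem hook_eq_and_shape_of_le_hook {q a b : ℕ} {r : List ℕ}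
    (hlam : IsPartition (a :: b :: r) (2 * q)) (ha : 2 ≤ a) (hb : 1 ≤ b)
    (h01 : q ≤ hook (a :: b :: r) 0 1) (h10 : q ≤ hook (a :: b :: r) 1 0) :
    hook (a :: b :: r) 0 1 = q ∧ hook (a :: b :: r) 1 0 = q ∧
    ∃ x y : ℕ, 1 ≤ x ∧ x ≤ q - 1 ∧ x - 1 ≤ y ∧ y ≤ q - 2 ∧
      a :: b :: r = [q - x + 1, q - y] ++
        List.replicate (x - 1) 2 ++ List.replicate (y - (x - 1)) 1 := by
  obtain ⟨hs, hpos, hsum⟩ := hlam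
  have key := hook_zero_one_add_hook_one_zero r ha hb
  have hb2 : 2 ≤ b := by omega
  have hr : (r.map (· - 2)).sum = 0 := by omega
  have e01 := hook_zero_one_cons_cons r ha hb2
  have e10 := hook_one_zero_cons_cons hpos
  have hcr : conj r 1 ≤ r.length := List.countP_le_length
  refine ⟨by omega, by omega, conj r 1 + 1, r.length, by omega, by omega, by omega, by omega,
    ?_⟩
  have hr2 : ∀ c ∈ r, c ≤ 2 := by
    simpa [List.sum_eq_zero_iff, Nat.sub_eq_zero_iff_le] using hr
  have ea : q - (conj r 1 + 1) + 1 = a := by omega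
  have eb : q - r.length = b := by omega
  simp only [ea, eb, Nat.add_sub_cancel, List.cons_append, List.nil_append]
  exact congrArg _ (congrArg _ (eq_replicate_two_append_replicate_one hs.of_cons.of_cons
    (fun c hc => hpos c (by simp [hc])) hr2))

end PaperNote

open PaperNote in
/-- Let `λ` be a partition of `2^k` (`k ≥ 2`) with no hook of length
divisible by `2^k` and exactly two hooks of length divisible by `2^{k-1}` (the condition
equivalent to `ν₂(χ^λ(1)) = 1`).  Then the two hooks sit at positions `(1,2)` and `(2,1)`
(0-indexed: `(0,1)` and `(1,0)`), both of length exactly `2^{k-1}`, and, writing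
`q = 2^{k-1}`, there are `x ∈ {1,…,q−1}` and `y ∈ {x−1,…,q−2}` with
`λ = (q−x+1, q−y, 2^{x−1}, 1^{y−x+1})`. -/
theorem classification_of_val_two_eq_one_partitions
    (k : ℕ) (hk : 2 ≤ k) (lam : List ℕ) (hlam : IsPartition lam (2 ^ k))
    (h1 : (hookCells lam (2 ^ k)).card = 0)
    (h2 : (hookCells lam (2 ^ (k - 1))).card = 2) :
    hookCells lam (2 ^ (k - 1)) = {(0, 1), (1, 0)} ∧
    hook lam 0 1 = 2 ^ (k - 1) ∧ hook lam 1 0 = 2 ^ (k - 1) ∧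
    ∃ x y : ℕ, 1 ≤ x ∧ x ≤ 2 ^ (k - 1) - 1 ∧ x - 1 ≤ y ∧ y ≤ 2 ^ (k - 1) - 2 ∧
      lam = [2 ^ (k - 1) - x + 1, 2 ^ (k - 1) - y] ++
        List.replicate (x - 1) 2 ++ List.replicate (y - (x - 1)) 1 := by
  set q := 2 ^ (k - 1)
  have hn : 2 ^ k = 2 * q := by rw [← pow_succ']; congr 1; omega
  rw [hn] at hlam h1
  obtain ⟨hs, hpos, hsum⟩ := hlam
  obtain ⟨p₁, p₂, hne, hset⟩ := Finset.card_eq_two.1 h2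
  have hq := fun p (hp : p ∈ hookCells lam q) =>
    mem_cells_and_hook_eq_of_mem_hookCells hs hpos hsum h1 hp
  obtain ⟨hc₁, hk₁⟩ := hq p₁ (by simp [hset])
  obtain ⟨hc₂, hk₂⟩ := hq p₂ (by simp [hset])
  obtain ⟨c01, c10, h01, h10⟩ :=
    hook_le_hook_zero_one_and_hook_one_zero hs hc₁ hc₂ hne (hk₁.trans hk₂.symm)
  rw [mem_cells_iff hs] at c01 c10
  obtain ⟨a, b, r, rfl⟩ : ∃ a b r, lam = a :: b :: r := by
    match lam, c10 with
    | a :: b :: r, _ => exact ⟨a, b, r, rfl⟩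
  obtain ⟨e01, e10, hshape⟩ :=
    hook_eq_and_shape_of_le_hook ⟨hs, hpos, hsum⟩ c01 c10 (hk₁ ▸ h01) (hk₁ ▸ h10)
  have hsub : {(0, 1), (1, 0)} ⊆ hookCells (a :: b :: r) q := by
    rw [Finset.insert_subset_iff, Finset.singleton_subset_iff]
    exact ⟨Finset.mem_filter.2 ⟨(mem_cells_iff hs).2 c01, by rw [e01]⟩,
      Finset.mem_filter.2 ⟨(mem_cells_iff hs).2 c10, by rw [e10]⟩⟩
  exact ⟨(Finset.eq_of_subset_of_card_le hsub (by simp [h2])).symm, e01, e10, hshape⟩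
end

section
/- Let q ≥ 2, let x ∈ {1,...,q−1}, y ∈ {x−1,...,q−2}, set s = y − (x−1) and suppose s is even. Let λ = (q−x+1, q−y, 2^{x−1}, 1^{s}) (a partition of 2q) and μ = (q−y+s/2, 1^{y−s/2}) (a hook partition of q). Then the Littlewood–Richardson coefficient c^λ_{μ,μ} is positive; equivalently, χ^μ × χ^μ appears in the restriction of χ^λ from S_{2q} to S_q × S_q. -/
/-!
Write `x = a + 1`, `s = 2t` and `q = y + 2 + u`, so that `λ = (2t+u+2, u+2, 2^a, 1^{2t})` and
`μ = (t+u+2, 1^{a+t})`. The skew diagram `λ/μ` consists of `t` cells at the end of row `0`,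
row `1` minus its first cell, a strip in column `1` of rows `2, …, a+1`, and a strip in
column `0` of rows `a+t+1, …, a+2t+1`. Fill rows `0` and `1` and the top cell of the
column-`0` strip with `1`, the column-`1` strip with `2, …, a+1` and the rest of the
column-`0` strip with `a+2, …, a+t+1`, each from top to bottom. Then `1` occurs `t+u+2`
times and every other value `w ≤ a+t+1` exactly once, in a lower row than a cell holding
`w - 1`, so the reading word is a lattice word.
-/

namespace PaperNote

theorem readsBefore_trans {p q r : ℕ × ℕ} (hpq : readsBefore p q) (hqr : readsBefore q r) :
    readsBefore p r := by
  unfold readsBefore at *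
  omega

theorem card_filter_readsBefore_le_of_card_le_one {S : Finset (ℕ × ℕ)} {T : ℕ × ℕ → ℕ}
    {v : ℕ} (hunique : (S.filter (fun q => T q = v + 2)).card ≤ 1)
    (hpred : ∀ q ∈ S, T q = v + 2 → ∃ c ∈ S, T c = v + 1 ∧ readsBefore c q) (p : ℕ × ℕ) :
    (S.filter (fun q => readsBefore q p ∧ T q = v + 2)).card ≤
      (S.filter (fun q => readsBefore q p ∧ T q = v + 1)).card := by
  rcases Finset.eq_empty_or_nonempty (S.filter (fun q => readsBefore q p ∧ T q = v + 2))
    with hempty | ⟨q, hq⟩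
  · simp [hempty]
  · simp only [Finset.mem_filter] at hq
    obtain ⟨c, hcS, hcT, hcq⟩ := hpred q hq.1 hq.2.2
    have hc : c ∈ S.filter (fun q => readsBefore q p ∧ T q = v + 1) :=
      Finset.mem_filter.2 ⟨hcS, readsBefore_trans hcq hq.2.1, hcT⟩
    calc (S.filter (fun q => readsBefore q p ∧ T q = v + 2)).card
        ≤ (S.filter (fun q => T q = v + 2)).card :=
          Finset.card_le_card fun r hr => by
            simp only [Finset.mem_filter] at hr ⊢; exact ⟨hr.1, hr.2.2⟩
      _ ≤ 1 := hunique
      _ ≤ _ := Finset.card_pos.2 ⟨c, hc⟩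

theorem getD_hook (m k i : ℕ) :
    (m :: List.replicate k 1).getD i 0 = if i = 0 then m else if i ≤ k then 1 else 0 := by
  rcases i with _ | i
  · rfl
  · simp only [List.getD, List.getElem?_cons_succ, List.getElem?_replicate, Nat.add_eq_zero_iff,
      one_ne_zero, and_false, ↓reduceIte, Order.add_one_le_iff]
    split_ifs <;> rfl

namespace EvenCase

variable (a t u : ℕ)

def outer : List ℕ := [2 * t + u + 2, u + 2] ++ List.replicate a 2 ++ List.replicate (2 * t) 1

def inner : List ℕ := (t + u + 2) :: List.replicate (a + t) 1

theorem getD_inner (i : ℕ) : (inner a t u).getD i 0 =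
    if i = 0 then t + u + 2 else if i ≤ a + t then 1 else 0 :=
  getD_hook _ _ _

theorem getD_outer (i : ℕ) : (outer a t u).getD i 0 =
    if i = 0 then 2 * t + u + 2 else if i = 1 then u + 2 else if i < a + 2 then 2
    else if i < a + 2 * t + 2 then 1 else 0 := by
  rcases i with _ | _ | i
  · rfl
  · rfl
  · simp only [List.getD, outer, List.cons_append, List.nil_append, List.getElem?_cons_succ,
      List.getElem?_append, List.length_replicate, List.getElem?_replicate, Nat.add_eq_zero_iff,
      one_ne_zero, and_false, and_self, ↓reduceIte, Nat.add_eq_right, add_lt_add_iff_right,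
      Order.lt_add_one_iff, Order.add_one_le_iff]
    split_ifs <;> first | rfl | omega

theorem mem_skewCells {i j : ℕ} : (i, j) ∈ skewCells (outer a t u) (inner a t u) ↔
    (i = 0 ∧ t + u + 2 ≤ j ∧ j < 2 * t + u + 2) ∨
    (i = 1 ∧ (1 ≤ j ∨ a + t = 0) ∧ j < u + 2) ∨
    (2 ≤ i ∧ i ≤ a + 1 ∧ j = 1) ∨
    (a + t + 1 ≤ i ∧ i ≤ a + 2 * t + 1 ∧ j = 0) := by
  have hlen : (outer a t u).length = a + 2 * t + 2 := by simp [outer]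
  simp only [skewCells, cells, Finset.mem_filter, Finset.mem_product, Finset.mem_range, hlen,
    getD_outer, getD_inner]
  split_ifs <;> omega

def filling : ℕ × ℕ → ℕ := fun p =>
  if p.1 ≤ 1 then 1 else if 1 ≤ p.2 then p.1 else if p.1 = a + t + 1 then 1 else p.1 - t

/-- The cell of `filling` holding `w`, for `1 ≤ w ≤ a + t + 1`. -/
def cellOf (w : ℕ) : ℕ × ℕ := if w ≤ a + 1 then (w, 1) else (w + t, 0)

theorem filter_filling_eq_one :
    (skewCells (outer a t u) (inner a t u)).filter (fun p => filling a t p = 1) =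
      insert (a + t + 1, 0)
        ({0} ×ˢ Finset.Ico (t + u + 2) (2 * t + u + 2) ∪ {1} ×ˢ Finset.Ico 1 (u + 2)) := by
  ext ⟨i, j⟩
  simp only [Finset.mem_filter, mem_skewCells]
  simp only [filling, Finset.mem_insert, Finset.mem_union, Finset.mem_product,
    Finset.mem_singleton, Finset.mem_Ico, Prod.mk.injEq]
  split_ifs <;> omega

theorem filter_filling_eq_succ {v : ℕ} (hv : 1 ≤ v) :
    (skewCells (outer a t u) (inner a t u)).filter (fun p => filling a t p = v + 1) =
      if v ≤ a + t then {cellOf a t (v + 1)} else ∅ := by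
  ext ⟨i, j⟩
  simp only [Finset.mem_filter, mem_skewCells]
  simp only [filling, cellOf]
  split_ifs <;> simp only [Finset.mem_singleton, Finset.notMem_empty, Prod.mk.injEq, iff_false] <;>
    omega

theorem card_filter_filling_eq (v : ℕ) :
    ((skewCells (outer a t u) (inner a t u)).filter (fun p => filling a t p = v + 1)).card =
      (inner a t u).getD v 0 := by
  rw [getD_inner]
  rcases Nat.eq_zero_or_pos v with rfl | hv
  · rw [filter_filling_eq_one, Finset.card_insert_of_notMem, Finset.card_union_of_disjoint]
    · simp only [Finset.card_product, Finset.card_singleton, Nat.card_Ico, if_true]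
      omega
    · rw [Finset.disjoint_left]
      rintro ⟨i, j⟩ h0 h1
      simp only [Finset.mem_product, Finset.mem_singleton] at h0 h1
      omega
    · simp
  · rw [filter_filling_eq_succ a t u hv]
    split_ifs <;> simp only [Finset.card_singleton, Finset.card_empty] <;> omega

theorem filling_isLRTableau :
    IsLRTableau (outer a t u) (inner a t u) (inner a t u) (filling a t) := by
  refine ⟨?_, ?_, ?_, card_filter_filling_eq a t u, ?_⟩
  · rintro ⟨i, j⟩ hp
    rw [mem_skewCells] at hp
    simp only [filling]
    split_ifs <;> omega
  · intro i j j' hp hp' _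
    rw [mem_skewCells] at hp hp'
    simp only [filling]
    split_ifs <;> omega
  · intro i i' j hp hp' _
    rw [mem_skewCells] at hp hp'
    simp only [filling]
    split_ifs <;> omega
  · intro p _ v
    refine card_filter_readsBefore_le_of_card_le_one ?_ ?_ p
    · rw [filter_filling_eq_succ a t u (Nat.le_add_left 1 v)]
      split_ifs <;> simp
    · rintro ⟨i, j⟩ hq hT
      refine ⟨cellOf a t (v + 1), ?_, ?_, ?_⟩
      all_goals
        rw [mem_skewCells] at hq
        simp only [filling, cellOf, readsBefore] at hT ⊢
        split_ifs at hT ⊢ <;> first | (rw [mem_skewCells]; omega) | omega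

end EvenCase

end PaperNote

open PaperNote in
theorem lr_coefficient_mu_positive_even_case_general
    (q x y : ℕ) (hq : 2 ≤ q) (hx1 : 1 ≤ x)
    (hyx : x - 1 ≤ y) (hyq : y ≤ q - 2) (hs : Even (y - (x - 1))) :
    ∃ T : ℕ × ℕ → ℕ,
      IsLRTableau
        ([q - x + 1, q - y] ++ List.replicate (x - 1) 2 ++ List.replicate (y - (x - 1)) 1)
        ((q - y + (y - (x - 1)) / 2) :: List.replicate (y - (y - (x - 1)) / 2) 1)
        ((q - y + (y - (x - 1)) / 2) :: List.replicate (y - (y - (x - 1)) / 2) 1) T := by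
  obtain ⟨a, rfl⟩ : ∃ a, x = a + 1 := ⟨x - 1, by omega⟩
  obtain ⟨t, ht⟩ := hs
  obtain rfl : y = a + 2 * t := by omega
  obtain ⟨u, rfl⟩ : ∃ u, q = a + 2 * t + 2 + u := ⟨q - (a + 2 * t + 2), by omega⟩
  have hpart0 : a + 2 * t + 2 + u - (a + 1) + 1 = 2 * t + u + 2 := by omega
  have hpart1 : a + 2 * t + 2 + u - (a + 2 * t) = u + 2 := by omega
  have hones : a + 2 * t - (a + 1 - 1) = 2 * t := by omega
  have harm : a + 2 * t + 2 + u - (a + 2 * t) + 2 * t / 2 = t + u + 2 := by omega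
  have hleg : a + 2 * t - 2 * t / 2 = a + t := by omega
  rw [hpart0, hones, harm, hleg, hpart1, Nat.add_sub_cancel]
  exact ⟨_, EvenCase.filling_isLRTableau a t u⟩

open PaperNote in
/-- Let `q ≥ 2`, `x ∈ {1,…,q−1}`, `y ∈ {x−1,…,q−2}`, `s = y−(x−1)` even,
`λ = (q−x+1, q−y, 2^{x−1}, 1^s)` and `μ = (q−y+s/2, 1^{y−s/2})`.  Then the
Littlewood–Richardson coefficient `c^λ_{μ,μ}` is positive, i.e. there exists a
Littlewood–Richardson configuration of type `μ` for `[λ ∖ μ]`. -/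
theorem lr_coefficient_mu_positive_even_case
    (q x y : ℕ) (hq : 2 ≤ q) (hx1 : 1 ≤ x) (hxq : x ≤ q - 1)
    (hyx : x - 1 ≤ y) (hyq : y ≤ q - 2) (hs : Even (y - (x - 1))) :
    ∃ T : ℕ × ℕ → ℕ,
      IsLRTableau
        ([q - x + 1, q - y] ++ List.replicate (x - 1) 2 ++ List.replicate (y - (x - 1)) 1)
        ((q - y + (y - (x - 1)) / 2) :: List.replicate (y - (y - (x - 1)) / 2) 1)
        ((q - y + (y - (x - 1)) / 2) :: List.replicate (y - (y - (x - 1)) / 2) 1) T :=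
  lr_coefficient_mu_positive_even_case_general q x y hq hx1 hyx hyq hs
end

section
/- Let q ≥ 2, let x ∈ {1,...,q−1}, y ∈ {x−1,...,q−2}, set s = y − (x−1) and suppose s is odd. Let λ = (q−x+1, q−y, 2^{x−1}, 1^{s}) and μ = (q−y+(s−1)/2, 1^{y−(s−1)/2}). Then the Littlewood–Richardson coefficient c^λ_{μ,μ} is positive. -/
namespace PaperNote

/-! With `m = q − y`, `a = x − 1` and `s = 2t + 1`, the skew diagram `λ/μ` consists of the last
`t + 1` cells of row 0, the cells `1, …, m − 1` of row 1, the cells of column 1 in rows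
`2, …, a + 1` and the cells of column 0 in rows `a + t + 2, …, a + 2t + 2`.  Filling rows 0 and 1
with `1` and the remaining `a + t + 1` cells, from top to bottom, with `2, 3, …, a + t + 2` gives a
semistandard filling of content `μ` in which every entry `w ≥ 2` occurs exactly once, in a row
strictly below an occurrence of `w − 1`; so its reading word is a lattice word. -/

theorem getD_replicate_eq_ite {α : Type*} (n i : ℕ) (x d : α) :
    (List.replicate n x).getD i d = if i < n then x else d := by
  grind

theorem card_filter_readsBefore_add_two_le {S : Finset (ℕ × ℕ)} {T : ℕ × ℕ → ℕ}
    (hunique : ∀ v, (S.filter fun q => T q = v + 2).card ≤ 1)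
    (hpred : ∀ q ∈ S, ∀ v, T q = v + 2 → ∃ c ∈ S, T c = v + 1 ∧ c.1 < q.1) (p : ℕ × ℕ) (v : ℕ) :
    (S.filter fun q => readsBefore q p ∧ T q = v + 2).card ≤
      (S.filter fun q => readsBefore q p ∧ T q = v + 1).card := by
  obtain hempty | ⟨q, hq⟩ := (S.filter fun q => readsBefore q p ∧ T q = v + 2).eq_empty_or_nonempty
  · simp [hempty]
  obtain ⟨hqS, hqp, hqT⟩ := Finset.mem_filter.mp hq
  obtain ⟨c, hcS, hcT, hcq⟩ := hpred q hqS v hqT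
  have hcp : readsBefore c p := by unfold readsBefore at hqp ⊢; omega
  calc (S.filter fun q => readsBefore q p ∧ T q = v + 2).card
      ≤ (S.filter fun q => T q = v + 2).card :=
        Finset.card_le_card (Finset.monotone_filter_right S fun _ _ h => h.2)
    _ ≤ 1 := hunique v
    _ ≤ _ := Finset.card_pos.mpr ⟨c, Finset.mem_filter.mpr ⟨hcS, hcp, hcT⟩⟩

namespace OddCase

def shape (a t m : ℕ) : List ℕ :=
  [m + 2 * t + 1, m] ++ List.replicate a 2 ++ List.replicate (2 * t + 1) 1

def hookShape (a t m : ℕ) : List ℕ := (m + t) :: List.replicate (a + t + 1) 1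

def filling (t : ℕ) (p : ℕ × ℕ) : ℕ :=
  if p.1 ≤ 1 then 1 else if p.2 = 1 then p.1 else p.1 - t

/-- The cell of `λ/μ` carrying the entry `w ≥ 2`. -/
def cellOf (a t w : ℕ) : ℕ × ℕ :=
  if w ≤ a + 1 then (w, 1) else (w + t, 0)

theorem shape_getD (a t m i : ℕ) :
    (shape a t m).getD i 0 = if i = 0 then m + 2 * t + 1 else if i = 1 then m
      else if i ≤ a + 1 then 2 else if i ≤ a + 2 * t + 2 then 1 else 0 := by
  rcases i with _ | _ | i
  · rfl
  · rfl
  · simp only [shape, List.cons_append, List.nil_append, List.getD_cons_succ]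
    grind [getD_replicate_eq_ite, List.getD_append, List.getD_append_right]

theorem hookShape_getD (a t m i : ℕ) :
    (hookShape a t m).getD i 0 = if i = 0 then m + t else if i ≤ a + t + 1 then 1 else 0 := by
  rcases i with _ | i
  · rfl
  · simp only [hookShape, List.getD_cons_succ, getD_replicate_eq_ite]
    split_ifs <;> first | contradiction | omega

theorem mem_skewCells {a t m : ℕ} (hm : 1 ≤ m) (i j : ℕ) :
    (i, j) ∈ skewCells (shape a t m) (hookShape a t m) ↔
      (i = 0 ∧ m + t ≤ j ∧ j ≤ m + 2 * t) ∨ (i = 1 ∧ 1 ≤ j ∧ j + 1 ≤ m) ∨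
      (2 ≤ i ∧ i ≤ a + 1 ∧ j = 1) ∨ (a + t + 2 ≤ i ∧ i ≤ a + 2 * t + 2 ∧ j = 0) := by
  have hlen : (shape a t m).length = a + 2 * t + 3 := by
    simp only [shape, List.length_append, List.length_cons, List.length_nil, List.length_replicate]
    omega
  simp only [skewCells, cells, Finset.mem_filter, Finset.mem_product, Finset.mem_range,
    shape_getD, hookShape_getD, hlen]
  split_ifs <;> omega

theorem filter_filling_eq_one {a t m : ℕ} (hm : 1 ≤ m) :
    (skewCells (shape a t m) (hookShape a t m)).filter (fun p => filling t p = 1) =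
      {0} ×ˢ Finset.Icc (m + t) (m + 2 * t) ∪ {1} ×ˢ Finset.Icc 1 (m - 1) := by
  ext ⟨i, j⟩
  rw [Finset.mem_filter]
  simp only [mem_skewCells hm, filling, Finset.mem_union, Finset.mem_product,
    Finset.mem_singleton, Finset.mem_Icc]
  split_ifs <;> omega

theorem filter_filling_eq_of_two_le {a t m : ℕ} (hm : 1 ≤ m) {w : ℕ} (hw : 2 ≤ w) :
    (skewCells (shape a t m) (hookShape a t m)).filter (fun p => filling t p = w) =
      if w ≤ a + t + 2 then {cellOf a t w} else ∅ := by
  ext ⟨i, j⟩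
  rw [Finset.mem_filter]
  simp only [mem_skewCells hm, filling, cellOf]
  split_ifs <;> simp <;> omega

theorem card_filter_filling {a t m : ℕ} (hm : 1 ≤ m) (v : ℕ) :
    ((skewCells (shape a t m) (hookShape a t m)).filter (fun p => filling t p = v + 1)).card =
      (hookShape a t m).getD v 0 := by
  rcases v with _ | v
  · rw [filter_filling_eq_one hm, Finset.card_union_of_disjoint
      (Finset.disjoint_product.mpr (Or.inl (by simp))), hookShape_getD, if_pos rfl]
    simp only [Finset.card_product, Finset.card_singleton, one_mul, Nat.card_Icc]
    omega
  · rw [filter_filling_eq_of_two_le hm (by omega : 2 ≤ v + 1 + 1), hookShape_getD,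
      if_neg v.succ_ne_zero]
    split_ifs <;> first | omega | simp

theorem cellOf_fst_lt_succ (a t w : ℕ) : (cellOf a t w).1 < (cellOf a t (w + 1)).1 := by
  unfold cellOf
  split_ifs <;> dsimp only <;> omega

theorem exists_predecessor {a t m : ℕ} (hm : 2 ≤ m) :
    ∀ q ∈ skewCells (shape a t m) (hookShape a t m), ∀ v, filling t q = v + 2 →
      ∃ c ∈ skewCells (shape a t m) (hookShape a t m), filling t c = v + 1 ∧ c.1 < q.1 := by
  intro q hq v hqv
  have hqmem : q ∈ (skewCells (shape a t m) (hookShape a t m)).filter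
      (fun p => filling t p = v + 2) := Finset.mem_filter.mpr ⟨hq, hqv⟩
  rw [filter_filling_eq_of_two_le (by omega) (by omega : 2 ≤ v + 2)] at hqmem
  split_ifs at hqmem with hv
  · obtain rfl := Finset.mem_singleton.mp hqmem
    rcases v with _ | v
    · refine ⟨(1, 1), (mem_skewCells (by omega) 1 1).mpr (by omega), rfl, ?_⟩
      unfold cellOf
      split_ifs <;> dsimp only <;> omega
    · have hc : cellOf a t (v + 2) ∈ (skewCells (shape a t m) (hookShape a t m)).filter
          (fun p => filling t p = v + 2) := by
        rw [filter_filling_eq_of_two_le (by omega) (by omega : 2 ≤ v + 2), if_pos (by omega)]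
        exact Finset.mem_singleton_self _
      obtain ⟨hcS, hcv⟩ := Finset.mem_filter.mp hc
      exact ⟨_, hcS, hcv, cellOf_fst_lt_succ a t (v + 2)⟩
  · simp at hqmem

theorem isLRTableau_filling {a t m : ℕ} (hm : 2 ≤ m) :
    IsLRTableau (shape a t m) (hookShape a t m) (hookShape a t m) (filling t) := by
  refine ⟨?_, ?_, ?_, fun v => card_filter_filling (by omega) v,
    fun p _ => card_filter_readsBefore_add_two_le ?_ (exists_predecessor hm) p⟩
  · rintro ⟨i, j⟩ hp
    rw [mem_skewCells (by omega)] at hp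
    simp only [filling]
    split_ifs <;> omega
  · intro i j j' h h' _
    rw [mem_skewCells (by omega)] at h h'
    simp only [filling]
    split_ifs <;> omega
  · intro i i' j h h' _
    rw [mem_skewCells (by omega)] at h h'
    simp only [filling]
    split_ifs <;> omega
  · intro v
    rw [filter_filling_eq_of_two_le (by omega) (by omega : 2 ≤ v + 2)]
    split_ifs <;> simp

end OddCase

end PaperNote

open PaperNote in
theorem lr_coefficient_mu_positive_odd_case_general
    (q x y : ℕ) (hq : 2 ≤ q) (hx1 : 1 ≤ x)
    (hyx : x - 1 ≤ y) (hyq : y ≤ q - 2) (hs : Odd (y - (x - 1))) :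
    ∃ T : ℕ × ℕ → ℕ,
      IsLRTableau
        ([q - x + 1, q - y] ++ List.replicate (x - 1) 2 ++ List.replicate (y - (x - 1)) 1)
        ((q - y + (y - (x - 1) - 1) / 2) :: List.replicate (y - (y - (x - 1) - 1) / 2) 1)
        ((q - y + (y - (x - 1) - 1) / 2) :: List.replicate (y - (y - (x - 1) - 1) / 2) 1) T := by
  obtain ⟨t, ht⟩ := hs
  have hrow0 : q - x + 1 = (q - y) + 2 * t + 1 := by omega
  have hs : y - (x - 1) = 2 * t + 1 := by omega
  have hhalf : (y - (x - 1) - 1) / 2 = t := by omega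
  have hleg : y - t = (x - 1) + t + 1 := by omega
  rw [hhalf, hrow0, hs, hleg]
  exact ⟨OddCase.filling t, OddCase.isLRTableau_filling (a := x - 1) (by omega : 2 ≤ q - y)⟩

open PaperNote in
/-- Let `q ≥ 2`, `x ∈ {1,…,q−1}`, `y ∈ {x−1,…,q−2}`, `s = y−(x−1)` odd,
`λ = (q−x+1, q−y, 2^{x−1}, 1^s)` and `μ = (q−y+(s−1)/2, 1^{y−(s−1)/2})`.  Then the
Littlewood–Richardson coefficient `c^λ_{μ,μ}` is positive. -/
theorem lr_coefficient_mu_positive_odd_case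
    (q x y : ℕ) (hq : 2 ≤ q) (hx1 : 1 ≤ x) (hxq : x ≤ q - 1)
    (hyx : x - 1 ≤ y) (hyq : y ≤ q - 2) (hs : Odd (y - (x - 1))) :
    ∃ T : ℕ × ℕ → ℕ,
      IsLRTableau
        ([q - x + 1, q - y] ++ List.replicate (x - 1) 2 ++ List.replicate (y - (x - 1)) 1)
        ((q - y + (y - (x - 1) - 1) / 2) :: List.replicate (y - (y - (x - 1) - 1) / 2) 1)
        ((q - y + (y - (x - 1) - 1) / 2) :: List.replicate (y - (y - (x - 1) - 1) / 2) 1) T :=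
  lr_coefficient_mu_positive_odd_case_general q x y hq hx1 hyx hyq hs
end

section
/- Let λ be a partition of 2n and let Δ²(λ) be the partition of n defined from the odd and even parts of λ. Then the irreducible character χ^{Δ²(λ)} × χ^{Δ²(λ)} of S_n × S_n is a constituent of the restriction of χ^λ from S_{2n} to S_n × S_n; equivalently, the Littlewood–Richardson coefficient c^λ_{Δ²(λ), Δ²(λ)} is positive. -/
namespace List

theorem antitone_getD_of_pairwise_ge {l : List ℕ} (hl : l.Pairwise (· ≥ ·)) :
    Antitone (l.getD · 0) := by
  intro i j hij
  rcases Nat.lt_or_ge j l.length with hj | hj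
  · rcases hij.lt_or_eq with hlt | rfl
    · simp only [getD_eq_getElem _ _ hj, getD_eq_getElem _ _ (hlt.trans hj)]
      exact pairwise_iff_getElem.1 hl i j (hlt.trans hj) hj hlt
    · exact le_rfl
  · exact (getD_eq_default _ _ hj).trans_le (Nat.zero_le _)

theorem map_getD_range (l : List ℕ) (d : ℕ) : (range l.length).map (l.getD · d) = l := by
  apply ext_getElem <;> simp +contextual

theorem filter_eq_map_getD_range (l : List ℕ) (q : ℕ → Bool) :
    l.filter q = ((range l.length).filter (fun i => q (l.getD i 0))).map (l.getD · 0) := by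
  conv_lhs => rw [← map_getD_range l 0]
  rw [filter_map]
  rfl

theorem getD_filter_pos_map_range {f : ℕ → ℕ} (hf : Antitone f) {N : ℕ}
    (hN : ∀ i, 0 < f i → i < N) (j : ℕ) :
    (((range N).map f).filter (0 < ·)).getD j 0 = f j := by
  rcases Nat.eq_zero_or_pos (f j) with h0 | hpos
  · rw [h0]
    apply getD_eq_default
    rw [← countP_eq_length_filter, countP_map]
    calc countP _ (range N) = Nat.count (0 < f ·) N := rfl
      _ ≤ (range j).length := by
          rw [Nat.count_eq_card_filter_range, length_range]
          refine (Finset.card_le_card fun i hi => ?_).trans_eq (Finset.card_range j)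
          simp only [Finset.mem_filter, Finset.mem_range] at hi ⊢
          by_contra hij
          have := hf (not_lt.1 hij)
          omega
      _ = j := length_range
  · have hsplit : range N = range (j + 1) ++ (range (N - (j + 1))).map ((j + 1) + ·) := by
      rw [← range_add, Nat.add_sub_cancel' (hN j hpos)]
    have hpre : ((range (j + 1)).map f).filter (0 < ·) = (range (j + 1)).map f := by
      refine filter_eq_self.2 fun a ha => ?_
      obtain ⟨i, hi, rfl⟩ := mem_map.1 ha
      have := hf (Nat.le_of_lt_succ (mem_range.1 hi))
      simp only [decide_eq_true_eq]
      omega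
    rw [hsplit, map_append, filter_append, hpre, getD_append _ _ _ _ (by simp)]
    simp

theorem sum_mod_two_eq_countP (l : List ℕ) : l.sum % 2 = l.countP (· % 2 = 1) % 2 := by
  induction l with
  | nil => rfl
  | cons a l ih =>
    rw [sum_cons, countP_cons]
    split_ifs with h <;> simp only [decide_eq_true_eq] at h <;> omega

end List

namespace PaperNote

variable (lam : List ℕ)

def IsOddRow (i : ℕ) : Prop := lam.getD i 0 % 2 = 1

instance : DecidablePred (IsOddRow lam) := fun _ => Nat.decEq _ _

def oddRank (i : ℕ) : ℕ := Nat.count (IsOddRow lam) i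

def numOddRows : ℕ := oddRank lam lam.length

noncomputable def oddRow (k : ℕ) : ℕ := Nat.nth (IsOddRow lam) k

def IsUpperOddRow (i : ℕ) : Prop := IsOddRow lam i ∧ oddRank lam i < numOddRows lam / 2

def IsLowerOddRow (i : ℕ) : Prop := IsOddRow lam i ∧ numOddRows lam / 2 ≤ oddRank lam i

instance : DecidablePred (IsUpperOddRow lam) := fun _ => instDecidableAnd

instance : DecidablePred (IsLowerOddRow lam) := fun _ => instDecidableAnd

variable {lam}

section OddRows

theorem IsOddRow.lt_length {i : ℕ} (h : IsOddRow lam i) : i < lam.length := by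
  by_contra hi
  rw [IsOddRow, List.getD_eq_default _ _ (not_lt.1 hi)] at h
  exact absurd h (by decide)

theorem numOddRows_eq_countP : numOddRows lam = lam.countP (· % 2 = 1) := by
  conv_rhs => rw [← List.map_getD_range lam 0]
  rw [List.countP_map]
  rfl

theorem two_dvd_numOddRows (h : Even lam.sum) : 2 ∣ numOddRows lam := by
  have := lam.sum_mod_two_eq_countP
  rw [← numOddRows_eq_countP] at this
  rcases h with ⟨k, hk⟩
  omega

theorem oddRank_monotone : Monotone (oddRank lam) := Nat.count_monotone _

theorem oddRank_succ {i : ℕ} (h : IsOddRow lam i) : oddRank lam (i + 1) = oddRank lam i + 1 := by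
  simp [oddRank, Nat.count_succ, h]

theorem oddRank_lt_oddRank {i i' : ℕ} (h : IsOddRow lam i) (hi : i < i') :
    oddRank lam i < oddRank lam i' :=
  Nat.count_strict_mono h hi

theorem oddRank_lt_numOddRows {i : ℕ} (h : IsOddRow lam i) : oddRank lam i < numOddRows lam :=
  oddRank_lt_oddRank h h.lt_length

theorem lt_card_of_lt_numOddRows {k : ℕ} (hk : k < numOddRows lam) :
    ∀ hf : (Set.ofPred (IsOddRow lam)).Finite, k < hf.toFinset.card := by
  intro hf
  have : hf.toFinset = (Finset.range lam.length).filter (IsOddRow lam) := by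
    ext i
    simpa using fun h : IsOddRow lam i => h.lt_length
  rwa [this, ← Nat.count_eq_card_filter_range]

theorem isOddRow_oddRow {k : ℕ} (hk : k < numOddRows lam) : IsOddRow lam (oddRow lam k) :=
  Nat.nth_mem k (lt_card_of_lt_numOddRows hk)

theorem oddRank_oddRow {k : ℕ} (hk : k < numOddRows lam) : oddRank lam (oddRow lam k) = k :=
  Nat.count_nth (lt_card_of_lt_numOddRows hk)

theorem oddRow_oddRank {i : ℕ} (h : IsOddRow lam i) : oddRow lam (oddRank lam i) = i :=
  Nat.nth_count h

theorem exists_oddRank_eq {k : ℕ} (hk : k ≤ numOddRows lam) :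
    ∃ M ≤ lam.length, oddRank lam M = k := by
  rcases hk.lt_or_eq with hlt | rfl
  · exact ⟨oddRow lam k, (isOddRow_oddRow hlt).lt_length.le, oddRank_oddRow hlt⟩
  · exact ⟨lam.length, le_rfl, rfl⟩

theorem oddRow_lt_oddRow {k l : ℕ} (hkl : k < l) (hl : l < numOddRows lam) :
    oddRow lam k < oddRow lam l :=
  Nat.nth_lt_nth' hkl (lt_card_of_lt_numOddRows hl)

end OddRows

section Partners

variable (lam) in
noncomputable def lowerPartner (u : ℕ) : ℕ := oddRow lam (numOddRows lam / 2 + oddRank lam u)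

variable (lam) in
noncomputable def upperPartner (i : ℕ) : ℕ := oddRow lam (oddRank lam i - numOddRows lam / 2)

theorem IsUpperOddRow.oddRank_lowerPartner {u : ℕ} (hu : IsUpperOddRow lam u) :
    oddRank lam (lowerPartner lam u) = numOddRows lam / 2 + oddRank lam u :=
  oddRank_oddRow (by have := hu.2; omega)

theorem IsUpperOddRow.isLowerOddRow_lowerPartner {u : ℕ} (hu : IsUpperOddRow lam u) :
    IsLowerOddRow lam (lowerPartner lam u) :=
  ⟨isOddRow_oddRow (by have := hu.2; omega), by rw [hu.oddRank_lowerPartner]; omega⟩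

theorem IsUpperOddRow.lt_lowerPartner {u : ℕ} (hu : IsUpperOddRow lam u) :
    u < lowerPartner lam u := by
  conv_lhs => rw [← oddRow_oddRank hu.1]
  exact oddRow_lt_oddRow (by have := hu.2; omega) (by have := hu.2; omega)

theorem IsUpperOddRow.upperPartner_lowerPartner {u : ℕ} (hu : IsUpperOddRow lam u) :
    upperPartner lam (lowerPartner lam u) = u := by
  rw [upperPartner, hu.oddRank_lowerPartner, Nat.add_sub_cancel_left, oddRow_oddRank hu.1]

theorem IsLowerOddRow.lowerPartner_upperPartner (hev : 2 ∣ numOddRows lam) {i : ℕ}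
    (hi : IsLowerOddRow lam i) : lowerPartner lam (upperPartner lam i) = i := by
  have := oddRank_lt_numOddRows hi.1
  rw [lowerPartner, upperPartner, oddRank_oddRow (by omega), Nat.add_sub_cancel' hi.2,
    oddRow_oddRank hi.1]

theorem IsLowerOddRow.isUpperOddRow_upperPartner (hev : 2 ∣ numOddRows lam) {i : ℕ}
    (hi : IsLowerOddRow lam i) : IsUpperOddRow lam (upperPartner lam i) := by
  have := oddRank_lt_numOddRows hi.1
  exact ⟨isOddRow_oddRow (by omega), by rw [upperPartner, oddRank_oddRow (by omega)]; omega⟩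

theorem IsLowerOddRow.upperPartner_lt (hev : 2 ∣ numOddRows lam) {i : ℕ}
    (hi : IsLowerOddRow lam i) : upperPartner lam i < i := by
  conv_rhs => rw [← hi.lowerPartner_upperPartner hev]
  exact (hi.isUpperOddRow_upperPartner hev).lt_lowerPartner

theorem upperPartner_lt_upperPartner {i i' : ℕ} (hi : IsLowerOddRow lam i)
    (hi' : IsLowerOddRow lam i') (hlt : i < i') : upperPartner lam i < upperPartner lam i' := by
  have := oddRank_lt_oddRank hi.1 hlt
  have := oddRank_lt_numOddRows hi'.1
  exact oddRow_lt_oddRow (by have := hi.2; omega) (by omega)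

theorem lowerPartner_lt_lowerPartner_succ {u : ℕ} (hu : IsUpperOddRow lam u)
    (hu' : IsUpperOddRow lam (u + 1)) : lowerPartner lam u < lowerPartner lam (u + 1) := by
  have h := hu'.2
  rw [oddRank_succ hu.1] at h
  rw [lowerPartner, lowerPartner, oddRank_succ hu.1]
  exact oddRow_lt_oddRow (by omega) (by omega)

end Partners

section DeltaSqRow

variable (lam) in
def deltaSqRow (i : ℕ) : ℕ :=
  if IsUpperOddRow lam i then lam.getD i 0 / 2 + 1 else lam.getD i 0 / 2

theorem isUpperOddRow_or_isLowerOddRow_or_not_isOddRow (i : ℕ) :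
    IsUpperOddRow lam i ∨ IsLowerOddRow lam i ∨ ¬ IsOddRow lam i := by
  by_cases h : IsOddRow lam i
  · exact (Nat.lt_or_ge _ _).imp (⟨h, ·⟩) (fun h' => .inl ⟨h, h'⟩)
  · exact .inr (.inr h)

theorem IsUpperOddRow.not_isLowerOddRow {i : ℕ} (h : IsUpperOddRow lam i) :
    ¬ IsLowerOddRow lam i :=
  fun h' => absurd h.2 (not_lt.2 h'.2)

theorem IsUpperOddRow.getD_add_one {i : ℕ} (h : IsUpperOddRow lam i) :
    lam.getD i 0 + 1 = 2 * deltaSqRow lam i := by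
  have := h.1
  rw [IsOddRow] at this
  rw [deltaSqRow, if_pos h]
  omega

theorem IsLowerOddRow.getD_eq {i : ℕ} (h : IsLowerOddRow lam i) :
    lam.getD i 0 = 2 * deltaSqRow lam i + 1 := by
  have := h.1
  rw [IsOddRow] at this
  rw [deltaSqRow, if_neg (·.not_isLowerOddRow h)]
  omega

theorem getD_eq_of_not_isOddRow {i : ℕ} (h : ¬ IsOddRow lam i) :
    lam.getD i 0 = 2 * deltaSqRow lam i := by
  rw [IsOddRow] at h
  rw [deltaSqRow, if_neg (h ·.1)]
  omega

theorem deltaSqRow_le_getD (i : ℕ) : deltaSqRow lam i ≤ lam.getD i 0 := by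
  rcases isUpperOddRow_or_isLowerOddRow_or_not_isOddRow (lam := lam) i with h | h | h
  · have := h.getD_add_one
    have := h.1
    rw [IsOddRow] at this
    omega
  · have := h.getD_eq; omega
  · have := getD_eq_of_not_isOddRow h; omega

theorem deltaSqRow_antitone (hs : lam.Pairwise (· ≥ ·)) : Antitone (deltaSqRow lam) := by
  refine antitone_nat_of_succ_le fun i => ?_
  have hle : lam.getD (i + 1) 0 ≤ lam.getD i 0 :=
    List.antitone_getD_of_pairwise_ge hs (Nat.le_succ i)
  by_cases hu : IsUpperOddRow lam (i + 1)
  · have := hu.getD_add_one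
    by_cases ho : IsOddRow lam i
    · have hu' : IsUpperOddRow lam i := ⟨ho, by have := oddRank_succ ho; have := hu.2; omega⟩
      have := hu'.getD_add_one
      omega
    · have := getD_eq_of_not_isOddRow ho
      omega
  · have : lam.getD i 0 / 2 ≤ deltaSqRow lam i := by unfold deltaSqRow; split <;> omega
    rw [deltaSqRow, if_neg hu]
    omega

end DeltaSqRow

section DeltaSq

open List

variable (lam) in
def oddRowIndices : List ℕ := (range lam.length).filter (IsOddRow lam ·)

theorem map_deltaSqRow_oddRowIndices :
    (oddRowIndices lam).map (deltaSqRow lam) =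
      (((oddRowIndices lam).map (lam.getD · 0 / 2)).take (numOddRows lam / 2)).map (· + 1) ++
        ((oddRowIndices lam).map (lam.getD · 0 / 2)).drop (numOddRows lam / 2) := by
  obtain ⟨M, hM, hrank⟩ := exists_oddRank_eq (lam := lam) (Nat.div_le_self _ 2)
  set above := (range M).filter (IsOddRow lam ·)
  set below := ((range (lam.length - M)).map (M + ·)).filter (IsOddRow lam ·)
  have hsplit : oddRowIndices lam = above ++ below := by
    rw [oddRowIndices, ← filter_append, ← range_add, Nat.add_sub_cancel' hM]
  have hlen : (above.map (lam.getD · 0 / 2)).length = numOddRows lam / 2 := by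
    rw [length_map, ← hrank, ← countP_eq_length_filter]
    rfl
  rw [hsplit, map_append, map_append, take_left' hlen, drop_left' hlen, map_map]
  congr 1 <;> refine map_congr_left fun i hi => ?_
  · simp only [above, mem_filter, mem_range, decide_eq_true_eq] at hi
    rw [deltaSqRow, if_pos ⟨hi.2, hrank ▸ oddRank_lt_oddRank hi.2 hi.1⟩]
    rfl
  · simp only [below, mem_filter, mem_map, mem_range, decide_eq_true_eq] at hi
    obtain ⟨⟨k, -, rfl⟩, -⟩ := hi
    rw [deltaSqRow, if_neg fun h => ?_]
    have := oddRank_monotone (lam := lam) (Nat.le_add_right M k)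
    have := h.2
    omega

theorem deltaSq_eq (hs : lam.Pairwise (· ≥ ·)) :
    deltaSq lam = ((range lam.length).map (deltaSqRow lam)).filter (0 < ·) := by
  set evenRowIndices := (range lam.length).filter (fun i => !decide (IsOddRow lam i))
  have hks : (lam.filter fun a => decide (a % 2 = 1)).map (· / 2) =
      (oddRowIndices lam).map (lam.getD · 0 / 2) := by
    rw [filter_eq_map_getD_range, map_map]
    rfl
  have hrs : (lam.filter fun a => decide (a % 2 = 0)).map (· / 2) =
      evenRowIndices.map (deltaSqRow lam) := by
    rw [filter_eq_map_getD_range, map_map]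
    have : ∀ i, decide (lam.getD i 0 % 2 = 0) = !decide (IsOddRow lam i) := fun i => by
      rw [← decide_not]
      exact decide_eq_decide.2 (by unfold IsOddRow; omega)
    simp only [Function.comp_def, this]
    refine map_congr_left fun i hi => ?_
    simp only [mem_filter, Bool.not_eq_true', decide_eq_false_iff_not] at hi
    rw [deltaSqRow, if_neg (hi.2 ·.1)]
  have hlen : ((oddRowIndices lam).map (lam.getD · 0 / 2)).length / 2 = numOddRows lam / 2 := by
    rw [length_map, oddRowIndices, ← countP_eq_length_filter]
    rfl
  unfold deltaSq
  dsimp only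
  rw [hks, hrs, hlen, ← map_deltaSqRow_oddRowIndices, ← map_append]
  congr 1
  refine Perm.eq_of_pairwise' (r := (· ≥ ·)) (pairwise_insertionSort _ _) ?_ ?_
  · exact pairwise_map.2 ((pairwise_lt_range).imp fun h => deltaSqRow_antitone hs h.le)
  · exact (perm_insertionSort _ _).trans ((filter_append_perm _ _).map _)

theorem getD_deltaSq (hs : lam.Pairwise (· ≥ ·)) (j : ℕ) :
    (deltaSq lam).getD j 0 = deltaSqRow lam j := by
  rw [deltaSq_eq hs]
  refine getD_filter_pos_map_range (deltaSqRow_antitone hs) (fun i hi => ?_) j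
  by_contra hlen
  have := deltaSqRow_le_getD (lam := lam) i
  rw [getD_eq_default _ _ (not_lt.1 hlen)] at this
  omega

theorem mem_skewCells_deltaSq (hs : lam.Pairwise (· ≥ ·)) {i j : ℕ} :
    (i, j) ∈ skewCells lam (deltaSq lam) ↔ deltaSqRow lam i ≤ j ∧ j < lam.getD i 0 := by
  simp only [skewCells, cells, Finset.mem_filter, Finset.mem_product, Finset.mem_range,
    getD_deltaSq hs]
  refine ⟨fun h => ⟨h.2, h.1.2⟩, fun ⟨h1, h2⟩ => ⟨⟨⟨?_, ?_⟩, h2⟩, h1⟩⟩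
  · by_contra hlen
    rw [getD_eq_default _ _ (not_lt.1 hlen)] at h2
    omega
  · exact h2.trans_le (antitone_getD_of_pairwise_ge hs (Nat.zero_le _))

end DeltaSq


section Filling

variable (lam) in
noncomputable def lrFilling (q : ℕ × ℕ) : ℕ :=
  if IsLowerOddRow lam q.1 ∧ q.2 = deltaSqRow lam q.1 then upperPartner lam q.1 + 1 else q.1 + 1

variable (lam) in
/-- The first column of row `i` of `λ ∖ Δ²(λ)` that `lrFilling` labels `i + 1`. -/
def plainStart (i : ℕ) : ℕ := deltaSqRow lam i + if IsLowerOddRow lam i then 1 else 0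

theorem IsUpperOddRow.one_le_deltaSqRow {i : ℕ} (h : IsUpperOddRow lam i) :
    1 ≤ deltaSqRow lam i := by
  rw [deltaSqRow, if_pos h]
  omega

theorem getD_sub_plainStart (i : ℕ) :
    lam.getD i 0 - plainStart lam i = deltaSqRow lam i - if IsUpperOddRow lam i then 1 else 0 := by
  rw [plainStart]
  rcases isUpperOddRow_or_isLowerOddRow_or_not_isOddRow (lam := lam) i with h | h | h
  · rw [if_neg h.not_isLowerOddRow, if_pos h]
    have := h.getD_add_one
    omega
  · rw [if_pos h, if_neg (·.not_isLowerOddRow h)]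
    have := h.getD_eq
    omega
  · rw [if_neg (h ·.1), if_neg (h ·.1)]
    have := getD_eq_of_not_isOddRow h
    omega

theorem getD_sub_plainStart_antitone (hs : lam.Pairwise (· ≥ ·)) :
    Antitone fun i => lam.getD i 0 - plainStart lam i := by
  refine antitone_nat_of_succ_le fun v => ?_
  show lam.getD (v + 1) 0 - plainStart lam (v + 1) ≤ lam.getD v 0 - plainStart lam v
  rw [getD_sub_plainStart, getD_sub_plainStart]
  have hmm : deltaSqRow lam (v + 1) ≤ deltaSqRow lam v := deltaSqRow_antitone hs (Nat.le_succ v)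
  by_cases hv : IsUpperOddRow lam v
  · by_cases hv' : IsUpperOddRow lam (v + 1)
    · simp only [if_pos hv, if_pos hv']
      omega
    · have hle : lam.getD (v + 1) 0 ≤ lam.getD v 0 :=
        List.antitone_getD_of_pairwise_ge hs (Nat.le_succ v)
      have := hv.getD_add_one
      rw [if_pos hv, if_neg hv']
      rcases isUpperOddRow_or_isLowerOddRow_or_not_isOddRow (lam := lam) (v + 1) with h | h | h
      · exact absurd h hv'
      · have := h.getD_eq
        omega
      · have := getD_eq_of_not_isOddRow h
        omega
  · rw [if_neg hv]
    split_ifs <;> omega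

theorem lrFilling_of_isLowerOddRow {i : ℕ} (h : IsLowerOddRow lam i) :
    lrFilling lam (i, deltaSqRow lam i) = upperPartner lam i + 1 :=
  if_pos ⟨h, rfl⟩

theorem lrFilling_of_not_first {i j : ℕ} (h : ¬ (IsLowerOddRow lam i ∧ j = deltaSqRow lam i)) :
    lrFilling lam (i, j) = i + 1 :=
  if_neg h

theorem lrFilling_eq_succ_iff (hs : lam.Pairwise (· ≥ ·)) (hev : 2 ∣ numOddRows lam)
    {i j : ℕ} (hij : (i, j) ∈ skewCells lam (deltaSq lam)) (w : ℕ) :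
    lrFilling lam (i, j) = w + 1 ↔ (i = w ∧ plainStart lam w ≤ j) ∨
      (IsUpperOddRow lam w ∧ i = lowerPartner lam w ∧ j = deltaSqRow lam (lowerPartner lam w)) := by
  have hj := ((mem_skewCells_deltaSq hs).1 hij).1
  by_cases hfirst : IsLowerOddRow lam i ∧ j = deltaSqRow lam i
  · obtain ⟨hi, rfl⟩ := hfirst
    rw [lrFilling_of_isLowerOddRow hi]
    constructor
    · intro h
      obtain rfl : upperPartner lam i = w := by omega
      exact .inr ⟨hi.isUpperOddRow_upperPartner hev, (hi.lowerPartner_upperPartner hev).symm,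
        by rw [hi.lowerPartner_upperPartner hev]⟩
    · rintro (⟨rfl, h⟩ | ⟨hw, rfl, -⟩)
      · rw [plainStart, if_pos hi] at h
        omega
      · rw [hw.upperPartner_lowerPartner]
  · rw [lrFilling_of_not_first hfirst]
    constructor
    · intro h
      obtain rfl : i = w := by omega
      refine .inl ⟨rfl, ?_⟩
      rw [plainStart]
      split_ifs with hi
      · exact lt_of_le_of_ne hj (fun h => hfirst ⟨hi, h.symm⟩)
      · simpa using hj
    · rintro (⟨rfl, -⟩ | ⟨hw, rfl, rfl⟩)
      · rfl
      · exact absurd ⟨hw.isLowerOddRow_lowerPartner, rfl⟩ hfirst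

/-- Counting inside an arbitrary region `{(i, j) | lo i ≤ j}` gives both the content
(`lo = 0`) and the lattice property (reading prefixes). -/
theorem card_filter_lrFilling_eq_succ (hs : lam.Pairwise (· ≥ ·)) (hev : 2 ∣ numOddRows lam)
    (lo : ℕ → ℕ) (w : ℕ) :
    ((skewCells lam (deltaSq lam)).filter fun q => lo q.1 ≤ q.2 ∧ lrFilling lam q = w + 1).card =
      (lam.getD w 0 - max (lo w) (plainStart lam w)) +
        if IsUpperOddRow lam w ∧ lo (lowerPartner lam w) ≤ deltaSqRow lam (lowerPartner lam w)
        then 1 else 0 := by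
  have hset : ((skewCells lam (deltaSq lam)).filter
        fun q => lo q.1 ≤ q.2 ∧ lrFilling lam q = w + 1) =
      {w} ×ˢ Finset.Ico (max (lo w) (plainStart lam w)) (lam.getD w 0) ∪
        ({(lowerPartner lam w, deltaSqRow lam (lowerPartner lam w))} : Finset (ℕ × ℕ)).filter
          fun q => IsUpperOddRow lam w ∧ lo q.1 ≤ q.2 := by
    ext ⟨i, j⟩
    simp only [Finset.mem_filter, Finset.mem_union, Finset.mem_product, Finset.mem_singleton,
      Finset.mem_Ico, max_le_iff, Prod.mk.injEq]
    constructor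
    · rintro ⟨hij, hlo, hT⟩
      rcases (lrFilling_eq_succ_iff hs hev hij w).1 hT with ⟨rfl, h⟩ | ⟨hw, rfl, rfl⟩
      · exact .inl ⟨rfl, ⟨hlo, h⟩, ((mem_skewCells_deltaSq hs).1 hij).2⟩
      · exact .inr ⟨⟨rfl, rfl⟩, hw, hlo⟩
    · rintro (⟨rfl, ⟨hlo, h⟩, hlt⟩ | ⟨⟨rfl, rfl⟩, hw, hlo⟩)
      · have hij : (i, j) ∈ skewCells lam (deltaSq lam) :=
          (mem_skewCells_deltaSq hs).2 ⟨(Nat.le_add_right _ _).trans h, hlt⟩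
        exact ⟨hij, hlo, (lrFilling_eq_succ_iff hs hev hij _).2 (.inl ⟨rfl, h⟩)⟩
      · have := hw.isLowerOddRow_lowerPartner.getD_eq
        have hij := (mem_skewCells_deltaSq hs (i := lowerPartner lam w)).2 ⟨le_rfl, by omega⟩
        exact ⟨hij, hlo, (lrFilling_eq_succ_iff hs hev hij w).2 (.inr ⟨hw, rfl, rfl⟩)⟩
  rw [hset, Finset.card_union_of_disjoint, Finset.card_product, Finset.card_singleton,
    Nat.card_Ico, one_mul, Finset.filter_singleton]
  · split_ifs <;> rfl
  · refine Finset.disjoint_left.2 fun q hq hq' => ?_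
    simp only [Finset.mem_filter, Finset.mem_product, Finset.mem_singleton] at hq hq'
    obtain ⟨rfl, hw, -⟩ := hq'
    exact absurd hq.1 hw.lt_lowerPartner.ne'

end Filling

section LRTableau

theorem lrFilling_le_succ (hev : 2 ∣ numOddRows lam) (q : ℕ × ℕ) : lrFilling lam q ≤ q.1 + 1 := by
  unfold lrFilling
  split_ifs with h
  · exact Nat.succ_le_succ (h.1.upperPartner_lt hev).le
  · exact le_rfl

theorem lrFilling_le_lrFilling_of_le (hs : lam.Pairwise (· ≥ ·)) (hev : 2 ∣ numOddRows lam)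
    {i j j' : ℕ} (hj : (i, j) ∈ skewCells lam (deltaSq lam))
    (hj' : (i, j') ∈ skewCells lam (deltaSq lam)) (hle : j ≤ j') :
    lrFilling lam (i, j) ≤ lrFilling lam (i, j') := by
  by_cases hfirst : IsLowerOddRow lam i ∧ j' = deltaSqRow lam i
  · obtain rfl : j = j' := by have := ((mem_skewCells_deltaSq hs).1 hj).1; omega
    exact le_rfl
  · rw [lrFilling_of_not_first hfirst]
    exact lrFilling_le_succ hev _

theorem lrFilling_lt_lrFilling_of_lt (hs : lam.Pairwise (· ≥ ·)) (hev : 2 ∣ numOddRows lam)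
    {i i' j : ℕ} (hi : (i, j) ∈ skewCells lam (deltaSq lam))
    (hi' : (i', j) ∈ skewCells lam (deltaSq lam)) (hlt : i < i') :
    lrFilling lam (i, j) < lrFilling lam (i', j) := by
  by_cases hfirst : IsLowerOddRow lam i' ∧ j = deltaSqRow lam i'
  · obtain ⟨hlower', rfl⟩ := hfirst
    have hmm := deltaSqRow_antitone hs hlt.le
    have hle : lam.getD i' 0 ≤ lam.getD i 0 := List.antitone_getD_of_pairwise_ge hs hlt.le
    have hj := ((mem_skewCells_deltaSq hs).1 hi).1
    have := hlower'.getD_eq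
    have hlower : IsLowerOddRow lam i := by
      rcases isUpperOddRow_or_isLowerOddRow_or_not_isOddRow (lam := lam) i with h | h | h
      · have := h.getD_add_one
        omega
      · exact h
      · have := getD_eq_of_not_isOddRow h
        omega
    have heq : deltaSqRow lam i = deltaSqRow lam i' := by omega
    calc lrFilling lam (i, deltaSqRow lam i') = upperPartner lam i + 1 := by
          rw [← heq, lrFilling_of_isLowerOddRow hlower]
      _ < upperPartner lam i' + 1 :=
          Nat.succ_lt_succ (upperPartner_lt_upperPartner hlower hlower' hlt)
      _ = lrFilling lam (i', deltaSqRow lam i') := (lrFilling_of_isLowerOddRow hlower').symm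
  · rw [lrFilling_of_not_first hfirst]
    exact (lrFilling_le_succ hev _).trans_lt (Nat.succ_lt_succ hlt)

theorem card_filter_lrFilling_eq (hs : lam.Pairwise (· ≥ ·)) (hev : 2 ∣ numOddRows lam)
    (v : ℕ) :
    ((skewCells lam (deltaSq lam)).filter fun q => lrFilling lam q = v + 1).card =
      (deltaSq lam).getD v 0 := by
  have h := card_filter_lrFilling_eq_succ hs hev (fun _ => 0) v
  simp only [zero_le, true_and, and_true, zero_max] at h
  rw [h, getD_deltaSq hs, getD_sub_plainStart]
  split_ifs with hv
  · have := hv.one_le_deltaSqRow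
    omega
  · rfl


variable (lam) in
def readingBound (p : ℕ × ℕ) (i : ℕ) : ℕ :=
  if i < p.1 then 0 else if i = p.1 then p.2 else lam.getD i 0

theorem readsBefore_iff_readingBound_le {p : ℕ × ℕ} {i j : ℕ} (hj : j < lam.getD i 0) :
    readsBefore (i, j) p ↔ readingBound lam p i ≤ j := by
  unfold readsBefore readingBound
  split_ifs <;> omega

theorem not_readingBound_le_of_lt {p : ℕ × ℕ} {i : ℕ} (hi : IsLowerOddRow lam i) (hlt : p.1 < i) :
    ¬ readingBound lam p i ≤ deltaSqRow lam i := by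
  have := hi.getD_eq
  rw [readingBound, if_neg (by omega), if_neg (by omega)]
  omega

theorem card_reading_lrFilling_le (hs : lam.Pairwise (· ≥ ·)) (hev : 2 ∣ numOddRows lam)
    (p : ℕ × ℕ) (v : ℕ) :
    ((skewCells lam (deltaSq lam)).filter fun q => readsBefore q p ∧ lrFilling lam q = v + 2).card ≤
      ((skewCells lam (deltaSq lam)).filter
        fun q => readsBefore q p ∧ lrFilling lam q = v + 1).card := by
  have hprefix : ∀ w, ((skewCells lam (deltaSq lam)).filter
      fun q => readsBefore q p ∧ lrFilling lam q = w) = (skewCells lam (deltaSq lam)).filter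
      fun q => readingBound lam p q.1 ≤ q.2 ∧ lrFilling lam q = w := fun w =>
    Finset.filter_congr fun ⟨_, _⟩ hij => by
      rw [readsBefore_iff_readingBound_le ((mem_skewCells_deltaSq hs).1 hij).2]
  rw [hprefix, hprefix, card_filter_lrFilling_eq_succ hs hev _ (v + 1),
    card_filter_lrFilling_eq_succ hs hev _ v]
  have hanti : lam.getD (v + 1) 0 - plainStart lam (v + 1) ≤ lam.getD v 0 - plainStart lam v :=
    getD_sub_plainStart_antitone hs (Nat.le_succ v)
  rcases lt_trichotomy (v + 1) p.1 with h | h | h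
  · have hv : readingBound lam p v = 0 := if_pos (by omega)
    have hv' : readingBound lam p (v + 1) = 0 := if_pos h
    rw [hv, hv', zero_max, zero_max]
    by_cases hB : IsUpperOddRow lam (v + 1) ∧
        readingBound lam p (lowerPartner lam (v + 1)) ≤ deltaSqRow lam (lowerPartner lam (v + 1))
    · have hmm : deltaSqRow lam (v + 1) ≤ deltaSqRow lam v :=
        deltaSqRow_antitone hs (Nat.le_succ v)
      have := hB.1.one_le_deltaSqRow
      rw [if_pos hB, getD_sub_plainStart, getD_sub_plainStart, if_pos hB.1]
      by_cases hU : IsUpperOddRow lam v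
      · have hle : lowerPartner lam (v + 1) ≤ p.1 := not_lt.1 fun hlt =>
          not_readingBound_le_of_lt hB.1.isLowerOddRow_lowerPartner hlt hB.2
        have : readingBound lam p (lowerPartner lam v) = 0 :=
          if_pos ((lowerPartner_lt_lowerPartner_succ hU hB.1).trans_le hle)
        rw [if_pos hU, if_pos ⟨hU, by omega⟩]
        omega
      · rw [if_neg hU]
        omega
    · rw [if_neg hB]
      omega
  · have hv : readingBound lam p v = 0 := if_pos (by omega)
    rw [hv, zero_max, if_neg fun hB => not_readingBound_le_of_lt hB.1.isLowerOddRow_lowerPartner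
      (h ▸ hB.1.lt_lowerPartner) hB.2]
    have := le_max_right (readingBound lam p (v + 1)) (plainStart lam (v + 1))
    omega
  · have hv' : readingBound lam p (v + 1) = lam.getD (v + 1) 0 := by
      rw [readingBound, if_neg (by omega), if_neg (by omega)]
    rw [hv', if_neg fun hB => not_readingBound_le_of_lt hB.1.isLowerOddRow_lowerPartner
      (h.trans hB.1.lt_lowerPartner) hB.2]
    have := le_max_left (lam.getD (v + 1) 0) (plainStart lam (v + 1))
    omega

theorem isLRTableau_lrFilling (hs : lam.Pairwise (· ≥ ·)) (hev : 2 ∣ numOddRows lam) :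
    IsLRTableau lam (deltaSq lam) (deltaSq lam) (lrFilling lam) :=
  ⟨fun _ _ => by unfold lrFilling; split_ifs <;> omega,
    fun _ _ _ => lrFilling_le_lrFilling_of_le hs hev,
    fun _ _ _ => lrFilling_lt_lrFilling_of_lt hs hev,
    card_filter_lrFilling_eq hs hev,
    fun p _ => card_reading_lrFilling_le hs hev p⟩

end LRTableau

end PaperNote

open PaperNote in
/-- Let `λ` be a partition of `2n`.  Then `χ^{Δ²(λ)} × χ^{Δ²(λ)}` is a
constituent of the restriction of `χ^λ` to `S_n × S_n`; equivalently, the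
Littlewood–Richardson coefficient `c^λ_{Δ²(λ),Δ²(λ)}` is positive, i.e. there is a
Littlewood–Richardson configuration of type `Δ²(λ)` for `[λ ∖ Δ²(λ)]`. -/
theorem lr_coefficient_deltaSq_positive
    (n : ℕ) (lam : List ℕ) (hlam : IsPartition lam (2 * n)) :
    ∃ T : ℕ × ℕ → ℕ, IsLRTableau lam (deltaSq lam) (deltaSq lam) T := by
  obtain ⟨hs, -, hsum⟩ := hlam
  exact ⟨lrFilling lam, isLRTableau_lrFilling hs (two_dvd_numOddRows ⟨n, by omega⟩)⟩
end

section
/- Let k ≥ 1 and n = 2^k. A partition λ of n satisfies: χ^λ has odd degree if and only if λ is a hook partition, i.e., λ = (n−x, 1^x) for some 0 ≤ x ≤ n−1. -/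
/-!
Write `β_i = λ_i + ℓ - 1 - i` (`i < ℓ`) for the beta-numbers of `λ`. The hook lengths in row
`i` are `{1, …, β_i}` with the gaps `β_i - β_t` (`t > i`) removed, so the product `H` of all hook
lengths satisfies `H · ∏_{i<t} (β_i - β_t) = ∏ β_i!`. Expanding the Vandermonde determinant of
the `β_i` in the falling-factorial basis shows `∏ β_i! ∣ n! · ∏_{i<t} (β_i - β_t)`, so `H ∣ n!`.

For a prime `q`, Legendre's formula gives `ν_q(n!) = ∑_a ⌊n / q^a⌋`, while
`ν_q(H) = ∑_a #H_{q^a}(λ)` and the `e`-abacus shows `e · #H_e(λ) ≤ n`. Hence `q ∤ n! / H` forces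
`#H_{q^a}(λ) = ⌊n / q^a⌋` for all `a`. For `q = 2`, `n = 2^k` and `a = k` this yields a hook of
length `n`, which can only be the corner hook `λ_1 + ℓ - 1`, so `λ` is a hook. Conversely
`(n - x, 1^x)` has degree `C(n-1, x)`, odd for `n = 2^k` since `C(n-1, x) + C(n-1, x+1) =
C(n, x+1)` is even for `0 < x + 1 < n`.
-/

namespace PaperNote

open Finset
open scoped Nat

lemma sum_range_card_le_sum (s : Finset ℕ) : ∑ i ∈ range #s, i ≤ ∑ x ∈ s, x := by
  induction s using Finset.induction_on_max with
  | empty => simp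
  | insert a s has ih =>
    have hnot : a ∉ s := fun h => (has a h).false
    have hcard : #s ≤ a := by simpa using card_le_card fun x hx => mem_range.mpr (has x hx)
    rw [card_insert_of_notMem hnot, sum_range_succ, sum_insert hnot]
    omega

lemma not_dvd_div_iff_factorization_le {p a b : ℕ} (hp : p.Prime) (hba : b ∣ a) (ha : a ≠ 0) :
    ¬ p ∣ a / b ↔ a.factorization p ≤ b.factorization p := by
  have hb : b ≠ 0 := by rintro rfl; exact ha (zero_dvd_iff.mp hba)
  have hab : a / b ≠ 0 := (Nat.div_pos (Nat.le_of_dvd (Nat.pos_of_ne_zero ha) hba)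
    (Nat.pos_of_ne_zero hb)).ne'
  rw [hp.dvd_iff_one_le_factorization hab, Nat.factorization_div hba, Finsupp.tsub_apply]
  omega

lemma prod_range_sub_eq_factorial (m : ℕ) : ∏ j ∈ range m, (m - j) = m ! := by
  rw [← Nat.descFactorial_self, Nat.descFactorial_eq_prod_range]

lemma odd_choose_two_pow_sub_one (k : ℕ) {x : ℕ} (hx : x ≤ 2 ^ k - 1) :
    Odd ((2 ^ k - 1).choose x) := by
  induction x with
  | zero => simp
  | succ x ih =>
    have hpascal : (2 ^ k - 1).choose x + (2 ^ k - 1).choose (x + 1) = (2 ^ k).choose (x + 1) := by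
      rw [← Nat.choose_succ_succ', Nat.sub_add_cancel Nat.one_le_two_pow]
    have heven : Even ((2 ^ k).choose (x + 1)) :=
      even_iff_two_dvd.mpr (Nat.Prime.dvd_choose_pow Nat.prime_two (by omega) (by omega))
    rw [← hpascal, Nat.even_add] at heven
    rw [← Nat.not_even_iff_odd] at ih ⊢
    exact fun h => ih (by omega) (heven.mpr h)

lemma eq_replicate_one_of_sum_eq_length {t : List ℕ} (hp : ∀ a ∈ t, 0 < a)
    (h : t.sum = t.length) : t = List.replicate t.length 1 := by
  induction t with
  | nil => rfl
  | cons b t ih =>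
    have hb := hp b List.mem_cons_self
    have hpt : ∀ a ∈ t, 0 < a := fun a ha => hp a (List.mem_cons_of_mem b ha)
    have := t.length_le_sum_of_one_le hpt
    simp only [List.sum_cons, List.length_cons] at h
    rw [List.length_cons, List.replicate_succ, ← ih hpt (by omega)]
    congr
    omega

lemma prod_factorial_dvd_factorial_mul_prod_descFactorial {ι : Type*} (s : Finset ι)
    (b m : ι → ℕ) {N : ℕ} (h : ∑ i ∈ s, b i = N + ∑ i ∈ s, m i) :
    ∏ i ∈ s, (b i)! ∣ N ! * ∏ i ∈ s, (b i).descFactorial (m i) := by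
  by_cases hmb : ∀ i ∈ s, m i ≤ b i
  · have hN : ∑ i ∈ s, (b i - m i) = N := by rw [sum_tsub_distrib s hmb]; omega
    rw [prod_congr rfl fun i hi => (Nat.factorial_mul_descFactorial (hmb i hi)).symm,
      prod_mul_distrib, ← hN]
    exact mul_dvd_mul_right (Nat.prod_factorial_dvd_factorial_sum s _) _
  · push Not at hmb
    obtain ⟨i, hi, hbm⟩ := hmb
    rw [prod_eq_zero (f := fun i => (b i).descFactorial (m i)) hi
      (Nat.descFactorial_eq_zero_iff_lt.mpr hbm), mul_zero]
    exact dvd_zero _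

lemma prod_factorial_dvd_factorial_mul_det_vandermonde {L : ℕ} (b : Fin L → ℕ) {N : ℕ}
    (h : ∑ i, b i = N + ∑ i : Fin L, (i : ℕ)) :
    ((∏ i, (b i)! : ℕ) : ℤ) ∣ N ! * (Matrix.vandermonde fun i => (b i : ℤ)).det := by
  rw [Matrix.det_eval_matrixOfPolynomials_eq_det_vandermonde _ (fun j => descPochhammer ℤ j)
    (fun j => descPochhammer_natDegree ℤ j) (fun j => monic_descPochhammer ℤ j),
    Matrix.det_apply, mul_sum]
  refine dvd_sum fun σ _ => ?_
  rw [mul_smul_comm, Units.smul_def]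
  refine Dvd.dvd.mul_left ?_ _
  simp only [Matrix.of_apply, descPochhammer_eval_eq_descFactorial]
  rw [← Equiv.prod_comp σ]
  exact_mod_cast prod_factorial_dvd_factorial_mul_prod_descFactorial _ (b ∘ σ) (↑·)
    (by rw [← h]; exact Equiv.sum_comp σ b)

section Partition

variable {l : List ℕ}

lemma getD_antitone (hs : l.Pairwise (· ≥ ·)) : Antitone (l.getD · 0) := by
  intro i t hit
  dsimp only
  rcases lt_or_ge t l.length with ht | ht
  · rw [List.getD_eq_getElem l 0 ht, List.getD_eq_getElem l 0 (hit.trans_lt ht)]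
    rcases hit.eq_or_lt with rfl | hlt
    · rfl
    · exact List.pairwise_iff_getElem.mp hs i t _ ht hlt
  · rw [List.getD_eq_default l 0 ht]
    exact Nat.zero_le _

lemma lt_conj_iff (hs : l.Pairwise (· ≥ ·)) (i j : ℕ) : i < conj l j ↔ j < l.getD i 0 := by
  induction l generalizing i with
  | nil => simp [conj]
  | cons a t ih =>
    obtain ⟨hta, ht⟩ := List.pairwise_cons.mp hs
    have hconj : conj (a :: t) j = (if j < a then 1 else 0) + conj t j := by
      simp only [conj, List.countP_cons, decide_eq_true_eq]; omega
    by_cases hja : j < a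
    · rw [hconj, if_pos hja]
      cases i <;> simp only [List.getD_cons_zero, List.getD_cons_succ, ← ih ht] <;> omega
    · have hconj_t : conj t j = 0 :=
        List.countP_eq_zero.mpr fun b hb => by simpa using (hta b hb).trans (not_lt.mp hja)
      rw [hconj, if_neg hja, hconj_t]
      cases i with
      | zero => simpa using hja
      | succ i =>
        have hget : t.getD i 0 ≤ a := by
          rcases lt_or_ge i t.length with hi | hi
          · exact List.getD_eq_getElem t 0 hi ▸ hta _ (List.getElem_mem hi)
          · rw [List.getD_eq_default t 0 hi]; exact Nat.zero_le a
        simp only [List.getD_cons_succ]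
        omega

lemma sum_range_getD (l : List ℕ) : ∑ i ∈ range l.length, l.getD i 0 = l.sum := by
  induction l with
  | nil => simp
  | cons a t ih => simp only [List.length_cons, sum_range_succ', List.getD_cons_succ, ih,
      List.getD_cons_zero, List.sum_cons, add_comm]

lemma hook_add_add_add_one (hs : l.Pairwise (· ≥ ·)) {i j : ℕ} (hj : j < l.getD i 0) :
    hook l i j + i + j + 1 = l.getD i 0 + conj l j := by
  have := (lt_conj_iff hs i j).mpr hj
  unfold hook
  omega

def beta (l : List ℕ) (i : ℕ) : ℕ := l.getD i 0 + (l.length - 1 - i)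

lemma beta_antitone (hs : l.Pairwise (· ≥ ·)) : Antitone (beta l) := fun i t hit => by
  have : l.getD t 0 ≤ l.getD i 0 := getD_antitone hs hit
  unfold beta
  omega

lemma beta_lt_beta (hs : l.Pairwise (· ≥ ·)) {i t : ℕ} (hit : i < t) (ht : t < l.length) :
    beta l t < beta l i := by
  have : l.getD t 0 ≤ l.getD i 0 := getD_antitone hs hit.le
  unfold beta
  omega

lemma beta_strictAntiOn (hs : l.Pairwise (· ≥ ·)) : StrictAntiOn (beta l) (Set.Iio l.length) :=
  fun _ _ _ ht hit => beta_lt_beta hs hit ht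

lemma sum_beta (l : List ℕ) :
    ∑ i ∈ range l.length, beta l i = l.sum + ∑ i ∈ range l.length, i := by
  rw [← sum_range_getD, ← sum_range_reflect (fun i => i), ← sum_add_distrib]
  refine sum_congr rfl fun i hi => ?_
  rw [mem_range] at hi
  unfold beta
  omega

lemma beta_zero_le_sum (hp : ∀ a ∈ l, 0 < a) : beta l 0 ≤ l.sum := by
  rcases l with _ | ⟨a, t⟩
  · simp [beta]
  · have := t.length_le_sum_of_one_le fun b hb => hp b (List.mem_cons_of_mem a hb)
    simp only [beta, List.getD_cons_zero, List.length_cons, List.sum_cons]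
    omega

def rowGaps (l : List ℕ) (i : ℕ) : Finset ℕ := (Ioo i l.length).image (beta l i - beta l ·)

def rowHooks (l : List ℕ) (i : ℕ) : Finset ℕ := Icc 1 (beta l i) \ rowGaps l i

lemma injOn_beta_sub (hs : l.Pairwise (· ≥ ·)) (i : ℕ) :
    Set.InjOn (beta l i - beta l ·) (Ioo i l.length) := by
  intro t ht t' ht' he
  simp only [coe_Ioo, Set.mem_Ioo] at ht ht' he
  have := beta_lt_beta hs ht.1 ht.2
  have := beta_lt_beta hs ht'.1 ht'.2
  exact (beta_strictAntiOn hs).injOn ht.2 ht'.2 (by omega)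

lemma rowGaps_subset (hs : l.Pairwise (· ≥ ·)) (i : ℕ) : rowGaps l i ⊆ Icc 1 (beta l i) := by
  simp only [rowGaps, image_subset_iff, mem_Ioo, mem_Icc]
  intro t ht
  have := beta_lt_beta hs ht.1 ht.2
  omega

lemma card_rowHooks (hs : l.Pairwise (· ≥ ·)) (i : ℕ) : #(rowHooks l i) = l.getD i 0 := by
  rw [rowHooks, card_sdiff_of_subset (rowGaps_subset hs i), rowGaps,
    card_image_of_injOn (injOn_beta_sub hs i), Nat.card_Icc, Nat.card_Ioo, beta]
  omega

lemma hook_mem_rowHooks (hs : l.Pairwise (· ≥ ·)) {i j : ℕ} (hj : j < l.getD i 0) :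
    hook l i j ∈ rowHooks l i := by
  have hij := hook_add_add_add_one hs hj
  have hi := (lt_conj_iff hs i j).mpr hj
  have hconj : conj l j ≤ l.length := List.countP_le_length
  simp only [rowHooks, rowGaps, mem_sdiff, mem_Icc, mem_image, mem_Ioo, not_exists, not_and]
  refine ⟨by unfold beta; omega, fun t ⟨hit, htL⟩ hgap => ?_⟩
  -- a gap `β_i - β_t` would force `conj l j + λ_t = j + t + 1`, which `lt_conj_iff` at `t`
  -- rules out
  have : l.getD t 0 ≤ l.getD i 0 := getD_antitone hs hit.le
  have := lt_conj_iff hs t j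
  unfold beta at hgap
  omega

lemma hook_strictAntiOn (hs : l.Pairwise (· ≥ ·)) (i : ℕ) :
    StrictAntiOn (hook l i) (Set.Iio (l.getD i 0)) := by
  intro j hj j' hj' hjj'
  have := hook_add_add_add_one hs hj
  have := hook_add_add_add_one hs hj'
  have : conj l j' ≤ conj l j :=
    List.countP_mono_left fun a _ h => by simp only [decide_eq_true_eq] at h ⊢; omega
  omega

lemma image_hook_eq_rowHooks (hs : l.Pairwise (· ≥ ·)) (i : ℕ) :
    (range (l.getD i 0)).image (hook l i) = rowHooks l i := by
  refine eq_of_subset_of_card_le ?_ ?_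
  · simp only [image_subset_iff, mem_range]
    exact fun j hj => hook_mem_rowHooks hs hj
  · rw [card_rowHooks hs, card_image_of_injOn (by simpa using (hook_strictAntiOn hs i).injOn),
      card_range]

@[to_additive]
lemma prod_hook_row {M : Type*} [CommMonoid M] (hs : l.Pairwise (· ≥ ·)) (i : ℕ) (F : ℕ → M) :
    ∏ j ∈ range (l.getD i 0), F (hook l i j) = ∏ h ∈ rowHooks l i, F h := by
  rw [← image_hook_eq_rowHooks hs, prod_image (by simpa using (hook_strictAntiOn hs i).injOn)]

@[to_additive]
lemma prod_cells {M : Type*} [CommMonoid M] (hs : l.Pairwise (· ≥ ·)) (F : ℕ → ℕ → M) :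
    ∏ p ∈ cells l, F p.1 p.2 = ∏ i ∈ range l.length, ∏ j ∈ range (l.getD i 0), F i j := by
  rw [cells, prod_filter, prod_product]
  refine prod_congr rfl fun i _ => ?_
  rw [← prod_filter]
  congr 1
  ext j
  have : l.getD i 0 ≤ l.getD 0 0 := getD_antitone hs (Nat.zero_le i)
  simp only [mem_filter, mem_range]
  omega

def hookProd (l : List ℕ) : ℕ := ∏ p ∈ cells l, hook l p.1 p.2

def betaVandermonde (l : List ℕ) : ℕ :=
  ∏ i ∈ range l.length, ∏ t ∈ Ioo i l.length, (beta l i - beta l t)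

lemma hookProd_eq_prod_rowHooks (hs : l.Pairwise (· ≥ ·)) :
    hookProd l = ∏ i ∈ range l.length, ∏ h ∈ rowHooks l i, h := by
  rw [hookProd, prod_cells hs]
  exact prod_congr rfl fun i _ => prod_hook_row hs i id

lemma hookProd_mul_betaVandermonde (hs : l.Pairwise (· ≥ ·)) :
    hookProd l * betaVandermonde l = ∏ i ∈ range l.length, (beta l i)! := by
  rw [hookProd_eq_prod_rowHooks hs, betaVandermonde, ← prod_mul_distrib]
  refine prod_congr rfl fun i _ => ?_
  have hgaps : ∏ t ∈ Ioo i l.length, (beta l i - beta l t) = ∏ h ∈ rowGaps l i, h :=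
    (prod_image (f := id) (injOn_beta_sub hs i)).symm
  rw [hgaps, rowHooks, prod_sdiff (rowGaps_subset hs i), ← Ico_add_one_right_eq_Icc,
    prod_Ico_id_eq_factorial]

lemma betaVandermonde_pos (hs : l.Pairwise (· ≥ ·)) : 0 < betaVandermonde l :=
  prod_pos fun i _ => prod_pos fun t ht => by
    rw [mem_Ioo] at ht
    exact Nat.sub_pos_of_lt (beta_lt_beta hs ht.1 ht.2)

lemma natAbs_det_vandermonde_beta (hs : l.Pairwise (· ≥ ·)) :
    (Matrix.vandermonde fun i : Fin l.length => (beta l i : ℤ)).det.natAbs =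
      betaVandermonde l := by
  rw [Matrix.det_vandermonde, betaVandermonde, ← Fin.prod_univ_eq_prod_range,
    ← Int.natAbsHom_apply]
  simp only [map_prod, Int.natAbsHom_apply]
  refine prod_congr rfl fun i _ => ?_
  rw [← Fin.map_valEmbedding_Ioi, prod_map]
  refine prod_congr rfl fun t ht => ?_
  have := beta_antitone hs (mem_Ioi.mp ht).le
  simp only [Fin.valEmbedding_apply]
  omega

lemma hookProd_dvd_factorial (hs : l.Pairwise (· ≥ ·)) : hookProd l ∣ l.sum ! := by
  have hdvd := Int.natAbs_dvd_natAbs.mpr <| prod_factorial_dvd_factorial_mul_det_vandermonde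
    (fun i : Fin l.length => beta l i) (N := l.sum) (by
      rw [Fin.sum_univ_eq_sum_range (beta l), Fin.sum_univ_eq_sum_range (·)]
      exact sum_beta l)
  rw [Int.natAbs_natCast, Int.natAbs_mul, Int.natAbs_natCast, natAbs_det_vandermonde_beta hs,
    Fin.prod_univ_eq_prod_range (fun i => (beta l i)!), ← hookProd_mul_betaVandermonde hs] at hdvd
  exact Nat.dvd_of_mul_dvd_mul_right (betaVandermonde_pos hs) hdvd

lemma hook_mem_Icc_of_mem_cells (hs : l.Pairwise (· ≥ ·)) {c : ℕ × ℕ} (hc : c ∈ cells l) :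
    hook l c.1 c.2 ∈ Icc 1 (beta l 0) := by
  obtain ⟨hpos, hle⟩ := mem_Icc.mp (mem_sdiff.mp (hook_mem_rowHooks hs (mem_filter.mp hc).2)).1
  exact mem_Icc.mpr ⟨hpos, hle.trans (beta_antitone hs (Nat.zero_le _))⟩

lemma card_hookCells_eq_sum (hs : l.Pairwise (· ≥ ·)) (e : ℕ) :
    #(hookCells l e) = ∑ i ∈ range l.length, #{h ∈ rowHooks l i | e ∣ h} := by
  rw [hookCells, card_filter, sum_cells hs fun i j => if e ∣ hook l i j then 1 else 0]
  exact sum_congr rfl fun i _ => by rw [card_filter, sum_hook_row hs i (if e ∣ · then 1 else 0)]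

lemma factorization_hookProd (hs : l.Pairwise (· ≥ ·)) (hp : ∀ a ∈ l, 0 < a) {q b : ℕ}
    (hq : q.Prime) (hb : l.sum < q ^ b) :
    (hookProd l).factorization q = ∑ a ∈ Ico 1 b, #(hookCells l (q ^ a)) := by
  have hhook := fun c (hc : c ∈ cells l) => mem_Icc.mp (hook_mem_Icc_of_mem_cells hs hc)
  rw [hookProd, Nat.factorization_prod_apply fun c hc => Nat.one_le_iff_ne_zero.mp (hhook c hc).1]
  simp_rw [hookCells, card_filter]
  rw [sum_comm]
  refine sum_congr rfl fun c hc => ?_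
  rw [Nat.factorization_eq_card_pow_dvd_of_lt hq (hhook c hc).1
      (((hhook c hc).2.trans (beta_zero_le_sum hp)).trans_lt hb),
    card_filter]

/-- On the `e`-abacus of the beta-numbers, the beads on the runner of `β_i` below it: sliding all
beads down their runners moves `β_i` to `β_i % e + e * beadsBelow l e i`. -/
def beadsBelow (l : List ℕ) (e i : ℕ) : ℕ :=
  #{t ∈ Ioo i l.length | beta l t ≡ beta l i [MOD e]}

lemma card_filter_dvd_rowHooks_add_beadsBelow (hs : l.Pairwise (· ≥ ·)) (e i : ℕ) :
    #{h ∈ rowHooks l i | e ∣ h} + beadsBelow l e i = beta l i / e := by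
  have hgaps : #{h ∈ rowGaps l i | e ∣ h} = beadsBelow l e i := by
    rw [rowGaps, filter_image, card_image_of_injOn ((injOn_beta_sub hs i).mono (filter_subset _ _)),
      beadsBelow]
    congr 1
    refine filter_congr fun t ht => (Nat.modEq_iff_dvd' ?_).symm
    exact beta_antitone hs (mem_Ioo.mp ht).1.le
  have hsplit : {h ∈ rowHooks l i | e ∣ h} = {h ∈ Icc 1 (beta l i) | e ∣ h} \
      {h ∈ rowGaps l i | e ∣ h} := by
    ext h
    simp only [rowHooks, mem_filter, mem_sdiff]
    tauto
  have hsub := filter_subset_filter (e ∣ ·) (rowGaps_subset hs i)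
  have hdiv : #{h ∈ Icc 1 (beta l i) | e ∣ h} = beta l i / e := by
    rw [← Nat.Ioc_filter_dvd_card_eq_div, ← Icc_add_one_left_eq_Ioc, zero_add]
  have := card_le_card hsub
  rw [hdiv] at this
  rw [hsplit, card_sdiff_of_subset hsub, hdiv, ← hgaps]
  omega

lemma beadsBelow_lt {e s t : ℕ} (hst : s < t) (ht : t < l.length)
    (hmod : beta l s ≡ beta l t [MOD e]) : beadsBelow l e t < beadsBelow l e s := by
  refine card_lt_card ((ssubset_iff_of_subset fun u hu => ?_).mpr ⟨t, ?_, ?_⟩)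
  · simp only [mem_filter, mem_Ioo] at hu ⊢
    exact ⟨⟨hst.trans hu.1.1, hu.1.2⟩, hu.2.trans hmod.symm⟩
  · simp only [mem_filter, mem_Ioo]
    exact ⟨⟨hst, ht⟩, hmod.symm⟩
  · simp

lemma injOn_beadPosition {e : ℕ} (he : 0 < e) :
    Set.InjOn (fun t => beta l t % e + e * beadsBelow l e t) (range l.length) := by
  intro t ht t' ht' heq
  simp only [coe_range, Set.mem_Iio] at ht ht' heq
  have hmod : beta l t % e = beta l t' % e := by
    simpa [Nat.add_mul_mod_self_left, Nat.mod_mod] using congrArg (· % e) heq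
  have hbelow : beadsBelow l e t = beadsBelow l e t' := by
    rw [hmod] at heq
    exact Nat.eq_of_mul_eq_mul_left he (Nat.add_left_cancel heq)
  by_contra hne
  rcases lt_or_gt_of_ne hne with h | h
  · exact (beadsBelow_lt h ht' hmod).ne' hbelow
  · exact (beadsBelow_lt h ht hmod.symm).ne hbelow

lemma mul_card_hookCells_le (hs : l.Pairwise (· ≥ ·)) {e : ℕ} (he : 0 < e) :
    e * #(hookCells l e) ≤ l.sum := by
  set position := fun t => beta l t % e + e * beadsBelow l e t
  have hrow : ∀ i, e * #{h ∈ rowHooks l i | e ∣ h} + position i = beta l i := fun i =>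
    calc e * #{h ∈ rowHooks l i | e ∣ h} + position i
        = e * (#{h ∈ rowHooks l i | e ∣ h} + beadsBelow l e i) + beta l i % e := by ring
      _ = beta l i := by rw [card_filter_dvd_rowHooks_add_beadsBelow hs, Nat.div_add_mod]
  have hpos : ∑ i ∈ range l.length, i ≤ ∑ i ∈ range l.length, position i := by
    have h := sum_range_card_le_sum ((range l.length).image position)
    rwa [card_image_of_injOn (injOn_beadPosition he), card_range,
      sum_image (injOn_beadPosition he)] at h
  have hsum := sum_beta l
  simp only [← hrow, sum_add_distrib, ← mul_sum, ← card_hookCells_eq_sum hs] at hsum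
  omega

lemma card_hookCells_pow_eq_of_not_dvd (hs : l.Pairwise (· ≥ ·)) (hp : ∀ a ∈ l, 0 < a)
    {q b : ℕ} (hq : q.Prime) (hb : l.sum < q ^ b) (hdeg : ¬ q ∣ charDegree l) {a : ℕ}
    (ha : a ∈ Ico 1 b) : #(hookCells l (q ^ a)) = l.sum / q ^ a := by
  have hle : ∀ a ∈ Ico 1 b, #(hookCells l (q ^ a)) ≤ l.sum / q ^ a := fun a _ =>
    (Nat.le_div_iff_mul_le (pow_pos hq.pos a)).mpr
      (mul_comm (q ^ a) _ ▸ mul_card_hookCells_le hs (pow_pos hq.pos a))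
  have hval := (not_dvd_div_iff_factorization_le hq (hookProd_dvd_factorial hs)
    (Nat.factorial_ne_zero _)).mp hdeg
  rw [Nat.factorization_factorial hq (Nat.log_lt_of_lt_pow' (by rw [mem_Ico] at ha; omega) hb),
    factorization_hookProd hs hp hq hb] at hval
  exact (sum_eq_sum_iff_of_le hle).mp (le_antisymm (sum_le_sum hle) hval) a ha

lemma isHookPartition_of_beta_zero_eq_sum (hp : ∀ a ∈ l, 0 < a) (hl : l ≠ [])
    (h : beta l 0 = l.sum) : IsHookPartition l l.sum := by
  obtain ⟨a, t, rfl⟩ := List.exists_cons_of_ne_nil hl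
  have ha := hp a List.mem_cons_self
  have hpt : ∀ b ∈ t, 0 < b := fun b hb => hp b (List.mem_cons_of_mem a hb)
  simp only [beta, List.getD_cons_zero, List.length_cons, List.sum_cons] at h ⊢
  refine ⟨t.length, by omega, ?_⟩
  rw [← eq_replicate_one_of_sum_eq_length hpt (by omega)]
  congr
  omega

lemma isHookPartition_of_hookCells_nonempty (hs : l.Pairwise (· ≥ ·)) (hp : ∀ a ∈ l, 0 < a)
    (h : (hookCells l l.sum).Nonempty) : IsHookPartition l l.sum := by
  obtain ⟨c, hc⟩ := h
  obtain ⟨hcell, hdvd⟩ := mem_filter.mp hc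
  obtain ⟨hpos, hle⟩ := mem_Icc.mp (hook_mem_Icc_of_mem_cells hs hcell)
  have hl : l ≠ [] := by rintro rfl; simp [cells] at hcell
  have := Nat.le_of_dvd hpos hdvd
  exact isHookPartition_of_beta_zero_eq_sum hp hl
    (le_antisymm (beta_zero_le_sum hp) (by omega))

end Partition

lemma hookProd_cons_replicate {n x : ℕ} (hx : x < n) :
    hookProd ((n - x) :: List.replicate x 1) = n * (n - 1 - x)! * x ! := by
  set l := (n - x) :: List.replicate x 1
  have hs : l.Pairwise (· ≥ ·) := List.pairwise_cons.mpr
    ⟨fun b hb => by rw [List.eq_of_mem_replicate hb]; omega,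
      List.pairwise_replicate.mpr (.inr le_rfl)⟩
  have hconj : ∀ j, conj l j = (if j = 0 then x else 0) + if j < n - x then 1 else 0 := by
    simp [l, conj, List.countP_cons, List.countP_replicate]
  have harm : ∀ j < n - 1 - x, hook l 0 (j + 1) = n - 1 - x - j := by
    intro j hj
    have : conj l (j + 1) = 1 := by rw [hconj, if_neg j.succ_ne_zero, if_pos (by omega)]
    rw [hook, this, List.getD_cons_zero]
    omega
  have hleg : ∀ i < x, ∏ j ∈ range (l.getD (i + 1) 0), hook l (i + 1) j = x - i := by
    intro i hi
    have : conj l 0 = x + 1 := by rw [hconj, if_pos rfl, if_pos (by omega)]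
    have hrow : l.getD (i + 1) 0 = 1 := by
      rw [List.getD_cons_succ, List.getD_replicate]
      exact hi
    rw [hrow, prod_range_one, hook, this, hrow]
    omega
  have hcorner : hook l 0 0 = n := by
    rw [hook, hconj, if_pos rfl, if_pos (by omega), List.getD_cons_zero]
    omega
  rw [hookProd, prod_cells hs, List.length_cons, List.length_replicate, prod_range_succ',
    prod_congr rfl fun i hi => hleg i (mem_range.mp hi), prod_range_sub_eq_factorial,
    List.getD_cons_zero, show n - x = n - 1 - x + 1 by omega, prod_range_succ', hcorner,
    prod_congr rfl fun j hj => harm j (mem_range.mp hj), prod_range_sub_eq_factorial]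
  ring

lemma charDegree_cons_replicate {n x : ℕ} (hx : x < n) :
    charDegree ((n - x) :: List.replicate x 1) = (n - 1).choose x := by
  have hsum : ((n - x) :: List.replicate x 1).sum = n := by
    rw [List.sum_cons, List.sum_replicate, smul_eq_mul, mul_one]
    omega
  change _ ! / hookProd _ = _
  rw [hsum, hookProd_cons_replicate hx, Nat.choose_eq_factorial_div_factorial (by omega),
    ← Nat.mul_factorial_pred (by omega : n ≠ 0), mul_assoc, Nat.mul_div_mul_left _ _ (by omega),
    mul_comm x !, Nat.sub_right_comm]

end PaperNote

open PaperNote in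
/-- Let `k ≥ 1` and `n = 2^k`.  A partition `λ` of `n` labels an
odd-degree irreducible character of `S_n` (degree given by the hook length formula) if and
only if `λ` is a hook partition `(n−x, 1^x)`. -/
theorem odd_degree_iff_hook
    (k : ℕ) (hk : 1 ≤ k) (n : ℕ) (hn : n = 2 ^ k)
    (lam : List ℕ) (hlam : IsPartition lam n) :
    Odd (charDegree lam) ↔ IsHookPartition lam n := by
  obtain ⟨hs, hp, hsum⟩ := hlam
  subst hn
  constructor
  · intro hodd
    have hcard := card_hookCells_pow_eq_of_not_dvd hs hp Nat.prime_two
      (hsum ▸ Nat.pow_lt_pow_succ one_lt_two) hodd.not_two_dvd_nat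
      (Finset.mem_Ico.mpr ⟨hk, k.lt_succ_self⟩)
    rw [← hsum, Nat.div_self (hsum ▸ Nat.two_pow_pos k)] at hcard
    rw [← hsum]
    exact isHookPartition_of_hookCells_nonempty hs hp (Finset.card_pos.mp (by omega))
  · rintro ⟨x, hx, rfl⟩
    rw [charDegree_cons_replicate (by have := Nat.two_pow_pos k; omega)]
    exact odd_choose_two_pow_sub_one k (by omega)
end

section
/- Let λ be a partition of 2^k with λ₁ ≥ 2 (i.e. λ is a partition of the form considered, with hooks h_{1,2}(λ) = h_{2,1}(λ) = 2^{k-1}) of shape λ = (q−x+1, q−y, 2^{x−1}, 1^{y−x+1}) where q = 2^{k-1}, and suppose s = y−x+1 is odd and Δ²(λ) is a hook partition of q. Then λ₂ = 2, equivalently y = q − 2, and λ = (s+2, 2^x, 1^s). -/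
/-! Since `q` is even and `y ≡ x (mod 2)`, exactly one of the first two parts of `λ` is odd, and
together with the odd number `s` of parts equal to `1` it forms the odd parts `o, 1^s` of `λ`.
The larger half of the halved odd parts is incremented, so `Δ²(λ)` contains `o / 2 + 1 ≥ 2`, and
it contains `e / 2` for every even part `e` of `λ`. A hook has only one part `≥ 2`, so every even
part of `λ` is `2`; as `q − x + 1 > q − y ≥ 2`, the even one of the first two parts is `q − y = 2`.
-/

namespace PaperNote

theorem IsHookPartition.countP_two_le_le_one {l : List ℕ} {n : ℕ} (h : IsHookPartition l n) :
    l.countP (fun a => decide (2 ≤ a)) ≤ 1 := by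
  obtain ⟨x, -, rfl⟩ := h
  simp only [List.countP_cons, List.countP_replicate]
  split_ifs <;> simp_all

theorem pair_subperm_deltaSq {lam t : List ℕ} {o e : ℕ}
    (hodd : lam.filter (fun a => decide (a % 2 = 1)) = o :: t) (ht : t ≠ [])
    (he : e ∈ lam) (heven : e % 2 = 0) (he2 : 2 ≤ e) :
    List.Subperm [o / 2 + 1, e / 2] (deltaSq lam) := by
  obtain ⟨n, hn⟩ : ∃ n, t.length = n + 1 := Nat.exists_eq_succ_of_ne_zero (by simpa using ht)
  -- with at least two odd parts, the first one lies in the incremented half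
  have hhalf : (n + 2) / 2 = n / 2 + 1 := by omega
  have hrs : e / 2 ∈ (lam.filter (fun a => decide (a % 2 = 0))).map (fun a => a / 2) :=
    List.mem_map_of_mem (List.mem_filter.mpr ⟨he, by simpa using heven⟩)
  unfold deltaSq
  simp only [hodd, List.map_cons, List.length_cons, List.length_map, hn, hhalf, List.take_succ_cons]
  refine (List.Sublist.subperm ?_).trans ((List.perm_insertionSort _ _).filter _).symm.subperm
  rw [List.cons_append, List.cons_append, List.filter_cons_of_pos (by simp)]
  refine List.Sublist.cons_cons _ (List.singleton_sublist.mpr (List.mem_filter.mpr ⟨?_, ?_⟩))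
  · exact List.mem_append_right _ hrs
  · simp only [decide_eq_true_eq]
    omega

theorem le_two_of_isHookPartition_deltaSq {lam t : List ℕ} {n o e : ℕ}
    (hhook : IsHookPartition (deltaSq lam) n)
    (hodd : lam.filter (fun a => decide (a % 2 = 1)) = o :: t) (ht : t ≠ []) (ho : 2 ≤ o)
    (he : e ∈ lam) (heven : e % 2 = 0) : e ≤ 2 := by
  by_contra! he2
  have hpair : [o / 2 + 1, e / 2].countP (fun a => decide (2 ≤ a)) = 2 :=
    List.countP_eq_length.mpr (by simp; omega)
  have hcount := (pair_subperm_deltaSq hodd ht he heven he2.le).countP_le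
    (fun a => decide (2 ≤ a))
  have := hhook.countP_two_le_le_one
  omega

end PaperNote

open PaperNote in
theorem deltaSq_hook_forces_second_part_two_general
    (k : ℕ) (hk : 2 ≤ k) (q x y : ℕ) (hq : q = 2 ^ (k - 1))
    (hx1 : 1 ≤ x) (hyq : y ≤ q - 2)
    (hs : Odd (y - (x - 1)))
    (lam : List ℕ)
    (hlamdef : lam = [q - x + 1, q - y] ++ List.replicate (x - 1) 2 ++
      List.replicate (y - (x - 1)) 1)
    (hhook : IsHookPartition (deltaSq lam) q) :
    lam.getD 1 0 = 2 ∧ y = q - 2 ∧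
      lam = (y - (x - 1) + 2) :: (List.replicate x 2 ++ List.replicate (y - (x - 1)) 1) := by
  have hq_even : q % 2 = 0 := by
    rw [hq, Nat.pow_mod, ← Nat.sub_add_cancel (by omega : 1 ≤ k - 1)]
    simp
  obtain ⟨m, hm⟩ := hs
  rw [hm] at hlamdef ⊢
  have hfilter_odd (o : ℕ) (ho : [q - x + 1, q - y].filter (fun a => decide (a % 2 = 1)) = [o]) :
      lam.filter (fun a => decide (a % 2 = 1)) = o :: List.replicate (2 * m + 1) 1 := by
    rw [hlamdef, List.filter_append, List.filter_append, ho]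
    simp
  rcases Nat.mod_two_eq_zero_or_one x with hx | hx
  · have ha : (q - x + 1) % 2 = 1 := by omega
    have hb : (q - y) % 2 = 0 := by omega
    have hb2 := le_two_of_isHookPartition_deltaSq hhook (hfilter_odd (q - x + 1) (by simp [ha, hb]))
      (by simp) (by omega) (e := q - y) (by simp [hlamdef]) hb
    have hy : y = q - 2 := by omega
    refine ⟨by simp [hlamdef]; omega, hy, ?_⟩
    obtain ⟨x', rfl⟩ : ∃ x', x = x' + 1 := ⟨x - 1, by omega⟩
    rw [hlamdef, show q - (x' + 1) + 1 = 2 * m + 1 + 2 by omega, show q - y = 2 by omega]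
    simp [List.replicate_succ]
  · have ha : (q - x + 1) % 2 = 0 := by omega
    have hb : (q - y) % 2 = 1 := by omega
    have ha2 := le_two_of_isHookPartition_deltaSq hhook (hfilter_odd (q - y) (by simp [ha, hb]))
      (by simp) (by omega) (e := q - x + 1) (by simp [hlamdef]) ha
    omega

open PaperNote in
/-- Let `q = 2^{k-1}` (`k ≥ 2`), `λ = (q−x+1, q−y, 2^{x−1}, 1^{y−x+1})`
with `x ∈ {1,…,q−1}`, `y ∈ {x−1,…,q−2}`, suppose `s = y−x+1` is odd and `Δ²(λ)` is a hook
partition of `q`.  Then `λ₂ = 2`, equivalently `y = q−2`, and `λ = (s+2, 2^x, 1^s)`. -/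
theorem deltaSq_hook_forces_second_part_two
    (k : ℕ) (hk : 2 ≤ k) (q x y : ℕ) (hq : q = 2 ^ (k - 1))
    (hx1 : 1 ≤ x) (hxq : x ≤ q - 1) (hyx : x - 1 ≤ y) (hyq : y ≤ q - 2)
    (hs : Odd (y - (x - 1)))
    (lam : List ℕ)
    (hlamdef : lam = [q - x + 1, q - y] ++ List.replicate (x - 1) 2 ++
      List.replicate (y - (x - 1)) 1)
    (hhook : IsHookPartition (deltaSq lam) q) :
    lam.getD 1 0 = 2 ∧ y = q - 2 ∧
      lam = (y - (x - 1) + 2) :: (List.replicate x 2 ++ List.replicate (y - (x - 1)) 1) :=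
  deltaSq_hook_forces_second_part_two_general k hk q x y hq hx1 hyq hs lam hlamdef hhook
end
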